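/- arXiv:1907.00848 — 9 statements merged into one kernel-verified Lean document; each statement's English description precedes it below -/
import Mathlib

section
/- Let R > 0 and consider the ring weight E(R) = [R^2, R^2 + 1/π], whose Daubechies-operator eigenvalues are λ_k(R) = ∫_{πR^2}^{πR^2+1} (r^k/k!) e^{-r} dr for k = 0,1,2,…. If m is a natural number with m ≤ πR^2 ≤ m+1, then the eigenvalues satisfy the ordering λ_0(R) ≤ λ_1(R) ≤ … ≤ λ_m(R), and λ_{m+1}(R) ≥ λ_{m+2}(R) ≥ λ_{m+3}(R) ≥ …. -/
open Real MeasureTheory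

/-- Eigenvalues of the Daubechies localization operator on the ring
`E(R) = [R², R² + 1/π]`: `λ_k(R) = ∫_{πR²}^{πR²+1} (r^k/k!) e^{-r} dr`. -/
noncomputable def ringEigenvalue (k : ℕ) (R : ℝ) : ℝ :=
  ∫ r in (π * R ^ 2)..(π * R ^ 2 + 1), r ^ k / (Nat.factorial k) * Real.exp (-r)

/-!
Writing `f_k(r) = r^k e^{-r} / k!`, one has `f_{k+1}(r) = f_k(r) · r/(k+1)`. On the ring
`[πR², πR² + 1] ⊆ [m, m + 2]` the factor `r/(k+1)` is `≥ 1` for `k < m` and `≤ 1` for `k ≥ m + 1`,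
so the integrands, and hence the eigenvalues, are ordered as claimed.
-/

noncomputable def poissonWeight (k : ℕ) (r : ℝ) : ℝ :=
  r ^ k / (Nat.factorial k) * Real.exp (-r)

namespace poissonWeight

variable {k : ℕ} {r a b : ℝ}

lemma nonneg (hr : 0 ≤ r) : 0 ≤ poissonWeight k r := by
  unfold poissonWeight
  positivity

lemma succ_eq (k : ℕ) (r : ℝ) :
    poissonWeight (k + 1) r = poissonWeight k r * (r / ((k : ℝ) + 1)) := by
  unfold poissonWeight
  rw [pow_succ, Nat.factorial_succ]
  push_cast
  field_simp

lemma le_succ (hr : (k : ℝ) + 1 ≤ r) : poissonWeight k r ≤ poissonWeight (k + 1) r := by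
  have hq : 1 ≤ r / ((k : ℝ) + 1) := (one_le_div (by positivity)).mpr hr
  rw [succ_eq]
  exact le_mul_of_one_le_right (nonneg (by linarith)) hq

lemma succ_le (hr₀ : 0 ≤ r) (hr : r ≤ (k : ℝ) + 1) :
    poissonWeight (k + 1) r ≤ poissonWeight k r := by
  have hq : r / ((k : ℝ) + 1) ≤ 1 := (div_le_one (by positivity)).mpr hr
  rw [succ_eq]
  exact mul_le_of_le_one_right (nonneg hr₀) hq

lemma intervalIntegrable (k : ℕ) (a b : ℝ) :
    IntervalIntegrable (poissonWeight k) volume a b :=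
  (((continuous_pow k).div_const _).mul
    (Real.continuous_exp.comp continuous_neg)).intervalIntegrable a b

lemma integral_le_integral_succ (hab : a ≤ b) (ha : (k : ℝ) + 1 ≤ a) :
    ∫ r in a..b, poissonWeight k r ≤ ∫ r in a..b, poissonWeight (k + 1) r :=
  intervalIntegral.integral_mono_on hab (intervalIntegrable k a b)
    (intervalIntegrable (k + 1) a b) fun _ hr => le_succ (ha.trans hr.1)

lemma integral_succ_le_integral (hab : a ≤ b) (ha : 0 ≤ a) (hb : b ≤ (k : ℝ) + 1) :
    ∫ r in a..b, poissonWeight (k + 1) r ≤ ∫ r in a..b, poissonWeight k r :=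
  intervalIntegral.integral_mono_on hab (intervalIntegrable (k + 1) a b)
    (intervalIntegrable k a b) fun _ hr => succ_le (ha.trans hr.1) (hr.2.trans hb)

end poissonWeight

theorem ring_eigenvalue_ordering_general (R : ℝ) (m : ℕ)
    (hm₁ : (m : ℝ) ≤ π * R ^ 2) (hm₂ : π * R ^ 2 ≤ (m : ℝ) + 1) :
    (∀ k : ℕ, k < m → ringEigenvalue k R ≤ ringEigenvalue (k + 1) R) ∧
    (∀ k : ℕ, m + 1 ≤ k → ringEigenvalue (k + 1) R ≤ ringEigenvalue k R) := by
  have hab : π * R ^ 2 ≤ π * R ^ 2 + 1 := by linarith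
  constructor
  · intro k hk
    have hkm : (k : ℝ) + 1 ≤ m := by exact_mod_cast hk
    exact poissonWeight.integral_le_integral_succ hab (hkm.trans hm₁)
  · intro k hk
    have hkm : (m : ℝ) + 1 ≤ k := by exact_mod_cast hk
    exact poissonWeight.integral_succ_le_integral hab ((Nat.cast_nonneg m).trans hm₁)
      (by linarith)

/-- If `m ≤ πR² ≤ m+1`, then `λ_0(R) ≤ λ_1(R) ≤ … ≤ λ_m(R)` and
`λ_{m+1}(R) ≥ λ_{m+2}(R) ≥ …`. -/
theorem ring_eigenvalue_ordering (R : ℝ) (hR : 0 < R) (m : ℕ)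
    (hm₁ : (m : ℝ) ≤ π * R ^ 2) (hm₂ : π * R ^ 2 ≤ (m : ℝ) + 1) :
    (∀ k : ℕ, k < m → ringEigenvalue k R ≤ ringEigenvalue (k + 1) R) ∧
    (∀ k : ℕ, m + 1 ≤ k → ringEigenvalue (k + 1) R ≤ ringEigenvalue k R) :=
  ring_eigenvalue_ordering_general R m hm₁ hm₂
end

section
/- There exist constants C > 0 and R_0 > 0 such that for all R ≥ R_0, | sup_{k∈ℕ} ∫_{πR^2}^{πR^2+1} (r^k/k!) e^{-r} dr − 1/(π√2 · R) | ≤ C·R^{-3}. In other words, the operator norm of the Daubechies localization operator on the ring [R^2, R^2 + 1/π] equals (π√2)^{-1} R^{-1} + O(R^{-3}) as R → ∞. -/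
/-!
Write `a = πR²`, so that the target value is `1 / √(2πa)` and `λ_k(R)` integrates
`f_k(r) = r^k e^{-r} / k!` over `[a, a + 1]`.

Upper bound: for fixed `r`, `k ↦ r^k / k!` peaks at `m = ⌊r⌋`, and `r ↦ r^m e^{-r}` peaks at
`r = m`; with Stirling's lower bound `m! ≥ √(2πm) (m/e)^m` this gives
`f_k(r) ≤ 1 / √(2π(a - 1))` on `[a, a + 1]`, uniformly in `k`.

Lower bound: for `k = ⌈a⌉` the tangent-line bound for `k log r - r` at `r` and Robbins' upper
bound `k! ≤ √(2πk) (k/e)^k e^{1/(12k)}` give `f_k ≥ e^{-2/a} / √(2π(a + 1))` on `[a, a + 1]`.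

Both bounds differ from `1 / √(2πa)` by `O(a^{-3/2}) = O(R^{-3})`.
-/

open Real MeasureTheory

open Filter Topology Set
open scoped Nat

namespace Stirling

theorem stirlingSeq_le_sqrt_pi_mul_exp {n : ℕ} (hn : n ≠ 0) :
    stirlingSeq n ≤ √π * exp (1 / (12 * n)) := by
  obtain ⟨n, rfl⟩ := Nat.exists_eq_succ_of_ne_zero hn
  -- Robbins' bound makes `log (stirlingSeq n) - 1 / (12 n)` increasing.
  let g : ℕ → ℝ := fun n ↦ log (stirlingSeq (n + 1)) - 1 / (12 * (n + 1 : ℕ))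
  have hg : Monotone g := monotone_nat_of_le_succ fun n ↦ by
    have h := log_stirlingSeq_sdiff_le (n + 1)
    have hsplit : (1 : ℝ) / (12 * (n + 1)) - 1 / (12 * (n + 1 + 1))
        = 1 / (12 * (n + 1) * (n + 1 + 1)) := by field_simp; ring
    simp only [g]
    push_cast at h ⊢
    linarith
  have hlim : Tendsto g atTop (𝓝 (log √π)) := by
    rw [← sub_zero (log √π)]
    refine ((continuousAt_log (by positivity)).tendsto.comp
      (tendsto_stirlingSeq_sqrt_pi.comp (tendsto_add_atTop_nat 1))).sub ?_
    refine ((tendsto_const_div_atTop_nhds_zero_nat (12⁻¹ : ℝ)).comp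
      (tendsto_add_atTop_nat 1)).congr fun n ↦ ?_
    simp only [Function.comp_apply]
    push_cast
    field_simp
  have hle : g n ≤ log √π := hg.ge_of_tendsto hlim n
  calc stirlingSeq (n + 1) = exp (log (stirlingSeq (n + 1))) :=
        (exp_log (stirlingSeq'_pos n)).symm
    _ ≤ exp (log √π + 1 / (12 * (n + 1 : ℕ))) :=
        exp_le_exp.2 (by simp only [g] at hle; linarith)
    _ = √π * exp (1 / (12 * (n + 1 : ℕ))) := by rw [exp_add, exp_log (by positivity)]

theorem factorial_le_stirling_mul_exp {n : ℕ} (hn : n ≠ 0) :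
    (n ! : ℝ) ≤ √(2 * π * n) * (n / exp 1) ^ n * exp (1 / (12 * n)) := by
  have h := stirlingSeq_le_sqrt_pi_mul_exp hn
  rw [stirlingSeq, div_le_iff₀ (by positivity)] at h
  calc (n ! : ℝ) ≤ _ := h
    _ = _ := by rw [show (2 * π * n) = π * (2 * n) by ring, sqrt_mul pi_pos.le]; ring

end Stirling

open Stirling

theorem div_exp_one_pow (x : ℝ) (n : ℕ) : (x / exp 1) ^ n = x ^ n * exp (-n) := by
  rw [div_pow, exp_one_pow, exp_neg, div_eq_mul_inv]

theorem self_pow_div_factorial_mul_exp_neg_le {n : ℕ} (hn : n ≠ 0) :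
    (n : ℝ) ^ n / n ! * exp (-n) ≤ 1 / √(2 * π * n) := by
  have h := le_factorial_stirling n
  rw [div_exp_one_pow] at h
  rw [div_mul_eq_mul_div, div_le_div_iff₀ (by positivity) (by positivity)]
  linarith

theorem exp_neg_div_sqrt_le_self_pow_div_factorial_mul_exp_neg {n : ℕ} (hn : n ≠ 0) :
    exp (-(1 / (12 * n))) / √(2 * π * n) ≤ (n : ℝ) ^ n / n ! * exp (-n) := by
  have h := factorial_le_stirling_mul_exp hn
  rw [div_exp_one_pow] at h
  rw [div_mul_eq_mul_div, div_le_div_iff₀ (by positivity) (by positivity), exp_neg,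
    ← div_eq_inv_mul, div_le_iff₀ (by positivity)]
  linarith

/-- The tangent-line bound for the concave function `r ↦ k log r - r` at `a`. -/
theorem pow_mul_exp_neg_le_mul_exp (k : ℕ) {a r : ℝ} (ha : 0 < a) (hr : 0 ≤ r) :
    r ^ k * exp (-r) ≤ a ^ k * exp (-a) * exp ((k / a - 1) * (r - a)) := by
  have h : r / a ≤ exp (r / a - 1) := by linarith [add_one_le_exp (r / a - 1)]
  calc r ^ k * exp (-r) = a ^ k * (r / a) ^ k * exp (-r) := by
        rw [div_pow, mul_div_cancel₀ _ (pow_ne_zero _ ha.ne')]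
    _ ≤ a ^ k * exp (r / a - 1) ^ k * exp (-r) := by gcongr
    _ = a ^ k * exp (-a) * exp ((k / a - 1) * (r - a)) := by
        rw [← exp_nat_mul, mul_assoc, mul_assoc, ← exp_add, ← exp_add]
        congr 2
        field_simp
        ring

theorem pow_div_factorial_le_floor {r : ℝ} (hr : 0 ≤ r) (k : ℕ) :
    r ^ k / k ! ≤ r ^ ⌊r⌋₊ / ⌊r⌋₊ ! := by
  set m := ⌊r⌋₊
  rw [div_le_div_iff₀ (by positivity) (by positivity)]
  rcases le_total k m with hkm | hmk
  · obtain ⟨j, hj⟩ := Nat.exists_eq_add_of_le hkm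
    rw [hj]
    have hfac : ((k + j) ! : ℝ) ≤ k ! * r ^ j := by
      calc ((k + j) ! : ℝ) ≤ k ! * ((k + j : ℕ) : ℝ) ^ j := by
            rw [← Nat.factorial_mul_ascFactorial]
            exact_mod_cast Nat.mul_le_mul_left _ (Nat.ascFactorial_le_pow_add k j)
        _ ≤ k ! * r ^ j := by gcongr; exact hj ▸ Nat.floor_le hr
    calc r ^ k * ((k + j) ! : ℝ) ≤ r ^ k * (k ! * r ^ j) := by gcongr
      _ = r ^ (k + j) * k ! := by ring
  · obtain ⟨j, rfl⟩ := Nat.exists_eq_add_of_le hmk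
    have hfac : (m ! : ℝ) * r ^ j ≤ (m + j) ! := by
      calc (m ! : ℝ) * r ^ j ≤ m ! * ((m + 1 : ℕ) : ℝ) ^ j := by
            gcongr; push_cast; exact (Nat.lt_floor_add_one r).le
        _ ≤ (m + j) ! := by exact_mod_cast Nat.factorial_mul_pow_le_factorial
    calc r ^ (m + j) * (m ! : ℝ) = r ^ m * (m ! * r ^ j) := by ring
      _ ≤ r ^ m * (m + j) ! := by gcongr

theorem pow_div_factorial_mul_exp_neg_le (k : ℕ) {a r : ℝ} (ha : 1 < a) (har : a ≤ r) :
    r ^ k / k ! * exp (-r) ≤ 1 / √(2 * π * (a - 1)) := by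
  set m := ⌊r⌋₊
  have hm : m ≠ 0 := (Nat.floor_pos.2 (by linarith)).ne'
  have hma : a - 1 ≤ m := by linarith [Nat.lt_floor_add_one r]
  have hpeak := pow_mul_exp_neg_le_mul_exp m (a := m) (by positivity) (by linarith : 0 ≤ r)
  rw [div_self (by exact_mod_cast hm), sub_self, zero_mul, exp_zero, mul_one] at hpeak
  calc r ^ k / k ! * exp (-r) ≤ r ^ m / m ! * exp (-r) :=
        mul_le_mul_of_nonneg_right (pow_div_factorial_le_floor (by linarith) k) (exp_pos _).le
    _ = r ^ m * exp (-r) / m ! := by ring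
    _ ≤ m ^ m * exp (-m) / m ! := by gcongr
    _ = (m : ℝ) ^ m / m ! * exp (-m) := by ring
    _ ≤ 1 / √(2 * π * m) := self_pow_div_factorial_mul_exp_neg_le hm
    _ ≤ 1 / √(2 * π * (a - 1)) := by
        have : 0 < a - 1 := by linarith
        gcongr

theorem exp_neg_div_sqrt_le_pow_ceil_div_factorial_mul_exp_neg {a r : ℝ} (ha : 0 < a)
    (hr : r ∈ Icc a (a + 1)) :
    exp (-(2 / a)) / √(2 * π * (a + 1)) ≤ r ^ ⌈a⌉₊ / ⌈a⌉₊ ! * exp (-r) := by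
  obtain ⟨har, hra⟩ := hr
  set k := ⌈a⌉₊
  have hk : k ≠ 0 := (Nat.ceil_pos.2 ha).ne'
  have hak : a ≤ k := Nat.le_ceil a
  have hka : (k : ℝ) < a + 1 := Nat.ceil_lt_add_one ha.le
  have hr : 0 < r := by linarith
  have hpeak := pow_mul_exp_neg_le_mul_exp k hr (Nat.cast_nonneg k)
  -- `k` and `r` both lie in `[a, a + 1]`, so the tangent exponent `(k - r)² / r` is at most
  -- `1 / a`.
  have htangent : (k / r - 1) * (k - r) ≤ 1 / a := by
    have hsq : (k - r) ^ 2 ≤ 1 := by nlinarith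
    calc (k / r - 1) * (k - r) = (k - r) ^ 2 / r := by field_simp
      _ ≤ 1 / a := div_le_div₀ zero_le_one hsq ha har
  have hstirling : 1 / (12 * k) ≤ 1 / a := by
    gcongr; linarith
  calc exp (-(2 / a)) / √(2 * π * (a + 1))
      ≤ exp (-(1 / (12 * k))) / √(2 * π * k) * exp (-(1 / a)) := by
        rw [div_mul_eq_mul_div, ← exp_add]
        gcongr
        linarith [show 2 / a = 1 / a + 1 / a by ring]
    _ ≤ (k : ℝ) ^ k / k ! * exp (-k) * exp (-(1 / a)) := by
        gcongr; exact exp_neg_div_sqrt_le_self_pow_div_factorial_mul_exp_neg hk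
    _ ≤ (k : ℝ) ^ k / k ! * exp (-k) * exp (-((k / r - 1) * (k - r))) := by
        gcongr
    _ = (k : ℝ) ^ k * exp (-k) / exp ((k / r - 1) * (k - r)) / k ! := by
        rw [exp_neg ((k / r - 1) * (k - r))]; ring
    _ ≤ r ^ k * exp (-r) / k ! := by
        gcongr
        exact div_le_of_le_mul₀ (exp_pos _).le (by positivity) hpeak
    _ = r ^ k / k ! * exp (-r) := by ring

theorem ringEigenvalue_le (k : ℕ) {R : ℝ} (hR : 1 < π * R ^ 2) :
    ringEigenvalue k R ≤ 1 / √(2 * π * (π * R ^ 2 - 1)) := by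
  have h := intervalIntegral.integral_mono_on (μ := volume)
    (le_add_of_nonneg_right zero_le_one) (Continuous.intervalIntegrable (by fun_prop) _ _)
    intervalIntegrable_const
    fun r hr ↦ pow_div_factorial_mul_exp_neg_le k hR hr.1
  simpa [ringEigenvalue] using h

theorem le_ringEigenvalue_ceil {R : ℝ} (hR : 0 < π * R ^ 2) :
    exp (-(2 / (π * R ^ 2))) / √(2 * π * (π * R ^ 2 + 1)) ≤
      ringEigenvalue ⌈π * R ^ 2⌉₊ R := by
  have h := intervalIntegral.integral_mono_on (μ := volume)
    (le_add_of_nonneg_right zero_le_one) intervalIntegrable_const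
    (Continuous.intervalIntegrable (by fun_prop) _ _)
    fun r hr ↦ exp_neg_div_sqrt_le_pow_ceil_div_factorial_mul_exp_neg hR hr
  simpa [ringEigenvalue] using h

theorem iSup_ringEigenvalue_mem_Icc {R : ℝ} (hR : 1 < π * R ^ 2) :
    ⨆ k, ringEigenvalue k R ∈ Icc (exp (-(2 / (π * R ^ 2))) / √(2 * π * (π * R ^ 2 + 1)))
      (1 / √(2 * π * (π * R ^ 2 - 1))) :=
  have hbdd : BddAbove (range fun k ↦ ringEigenvalue k R) :=
    ⟨_, forall_mem_range.2 fun k ↦ ringEigenvalue_le k hR⟩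
  ⟨(le_ringEigenvalue_ceil (by linarith)).trans (le_ciSup hbdd _),
    ciSup_le fun k ↦ ringEigenvalue_le k hR⟩

theorem one_div_sub_one_div_le {u s : ℝ} (hu : 0 < u) (hus : u ≤ s) :
    1 / u - 1 / s ≤ (s ^ 2 - u ^ 2) / (2 * u ^ 2 * s) := by
  have hs : 0 < s := hu.trans_le hus
  rw [div_sub_div _ _ hu.ne' hs.ne', div_le_div_iff₀ (by positivity) (by positivity)]
  nlinarith [mul_nonneg (mul_pos hu hs).le (sq_nonneg (s - u))]

theorem abs_sub_one_div_sqrt_le {a X : ℝ} (ha : 2 ≤ a)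
    (hX : X ∈ Icc (exp (-(2 / a)) / √(2 * π * (a + 1))) (1 / √(2 * π * (a - 1)))) :
    |X - 1 / √(2 * π * a)| ≤ 5 * π / √(2 * π * a) ^ 3 := by
  obtain ⟨hXlow, hXup⟩ := hX
  set s := √(2 * π * a)
  set u := √(2 * π * (a - 1))
  set v := √(2 * π * (a + 1))
  have hpi := pi_pos
  have hs2 : s ^ 2 = 2 * π * a := sq_sqrt (by positivity)
  have hu2 : u ^ 2 = 2 * π * (a - 1) := sq_sqrt (by nlinarith)
  have hv2 : v ^ 2 = 2 * π * (a + 1) := sq_sqrt (by positivity)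
  have hs : 0 < s := by positivity
  have hu : 0 < u := sqrt_pos.2 (by nlinarith)
  have hus : u ≤ s := sqrt_le_sqrt (by nlinarith)
  have hsv : s ≤ v := sqrt_le_sqrt (by nlinarith)
  have hexp : 1 - 4 * π / s ^ 2 ≤ exp (-(2 / a)) := by
    have h : 4 * π / s ^ 2 = 2 / a := by rw [hs2]; field_simp; ring
    linarith [add_one_le_exp (-(2 / a))]
  rw [abs_sub_le_iff]
  constructor
  · calc X - 1 / s ≤ 1 / u - 1 / s := by gcongr
      _ ≤ (s ^ 2 - u ^ 2) / (2 * u ^ 2 * s) := one_div_sub_one_div_le hu hus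
      _ = 2 * π / (2 * u ^ 2 * s) := by rw [hs2, hu2]; ring
      _ ≤ 2 * π / (s ^ 2 * s) := by gcongr; nlinarith
      _ ≤ 5 * π / s ^ 3 := by rw [← pow_succ]; gcongr; norm_num
  · calc 1 / s - X ≤ 1 / s - (1 - 4 * π / s ^ 2) / v := by
          gcongr
          exact le_trans (by gcongr) hXlow
      _ = (1 / s - 1 / v) + 4 * π / (s ^ 2 * v) := by ring
      _ ≤ (v ^ 2 - s ^ 2) / (2 * s ^ 2 * v) + 4 * π / (s ^ 2 * v) := by
          gcongr; exact one_div_sub_one_div_le hs hsv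
      _ = 5 * π / (s ^ 2 * v) := by
          rw [hv2, hs2]; field_simp; ring
      _ ≤ 5 * π / (s ^ 2 * s) := by gcongr
      _ = 5 * π / s ^ 3 := by ring

/-- The operator norm of the Daubechies localization operator on the ring
`[R², R² + 1/π]` equals `(π√2)⁻¹ R⁻¹ + O(R⁻³)` as `R → ∞`. -/
theorem ring_operator_norm_asymptotics :
    ∃ C > (0 : ℝ), ∃ R₀ > (0 : ℝ), ∀ R : ℝ, R₀ ≤ R →
      |(⨆ k : ℕ, ringEigenvalue k R) - 1 / (π * Real.sqrt 2 * R)| ≤ C * R ^ (-3 : ℤ) := by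
  refine ⟨1, one_pos, 1, one_pos, fun R hR ↦ ?_⟩
  have hR0 : 0 < R := by linarith
  have ha : 2 ≤ π * R ^ 2 := by nlinarith [pi_gt_three]
  have hsqrt : √(2 * π * (π * R ^ 2)) = π * √2 * R := by
    rw [show 2 * π * (π * R ^ 2) = 2 * (π * R) ^ 2 by ring, sqrt_mul zero_le_two,
      sqrt_sq (by positivity)]
    ring
  have h := abs_sub_one_div_sqrt_le ha (iSup_ringEigenvalue_mem_Icc (by linarith))
  rw [hsqrt] at h
  refine h.trans ?_
  have hsqrt2 : (1.4 : ℝ) ≤ √2 := le_sqrt_of_sq_le (by norm_num)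
  have hcube : (π * √2 * R) ^ 3 = 2 * √2 * π ^ 3 * R ^ 3 := by
    rw [show (π * √2 * R) ^ 3 = √2 ^ 2 * √2 * π ^ 3 * R ^ 3 by ring, sq_sqrt zero_le_two]
  rw [hcube, one_mul, zpow_neg, zpow_ofNat, ← one_div,
    div_le_div_iff₀ (by positivity) (by positivity)]
  calc 5 * π * R ^ 3 = 5 * (π * R ^ 3) := by ring
    _ ≤ 2 * √2 * π ^ 2 * (π * R ^ 3) := by gcongr; nlinarith [pi_gt_three]
    _ = 1 * (2 * √2 * π ^ 3 * R ^ 3) := by ring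
end

section
/- Let E(s) = ⋃_{n=0}^∞ (1/π)·[n, n+s] for s ∈ [0,1], so that the eigenvalues of the associated Daubechies localization operator are λ_k(s) = Σ_{n=0}^∞ ∫_n^{n+s} (r^k/k!) e^{-r} dr. Then with C = e/(e−1), for all s ∈ [0,1]: (1 − e^{-s})·C ≤ sup_{k∈ℕ} λ_k(s) ≤ min{C·s, 1}. -/
open Real MeasureTheory

/-- Eigenvalues of the Daubechies localization operator on the set of
equidistant intervals `E(s) = ⋃ₙ (1/π)·[n, n+s]`:
`λ_k(s) = Σ_{n=0}^∞ ∫_n^{n+s} (r^k/k!) e^{-r} dr`. -/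
noncomputable def equidistantEigenvalue (k : ℕ) (s : ℝ) : ℝ :=
  ∑' n : ℕ, ∫ r in (n : ℝ)..((n : ℝ) + s), r ^ k / (Nat.factorial k) * Real.exp (-r)

/-!
With `f_k(r) = r^k e^{-r} / k!` (`erlangWeight k`), a probability density on `(0, ∞)` that
increases on `[0, k]` and decreases on `[k, ∞)`:

* for `k = 0` the series is geometric, `λ₀(s) = (1 - e^{-s}) e/(e-1)`, which is the lower bound
  and is at most `e/(e-1) · s`;
* the intervals `[n, n + s]` are disjoint, so `λ_k(s) ≤ ∫ f_k = 1`;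
* shifting every interval to `[0, s]` gives `λ_k(s) = ∫_0^s Σ_n f_k(t + n) dt`. Bounding each
  value `f_k(t + n)` by the integral over the adjacent unit interval on the side of the mode
  `k`, and the two values straddling `k` with `f_k(k)` plus the unit interval between them,
  gives `Σ_n f_k(t + n) ≤ 1 + f_k(k) ≤ 3/2` for `k ≥ 1` by Stirling, and `3/2 ≤ e/(e-1)`.
-/

open Set Finset

noncomputable def erlangWeight (k : ℕ) (r : ℝ) : ℝ := r ^ k / k.factorial * exp (-r)

theorem erlangWeight_nonneg (k : ℕ) {r : ℝ} (hr : 0 ≤ r) : 0 ≤ erlangWeight k r := by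
  unfold erlangWeight; positivity

theorem continuous_erlangWeight (k : ℕ) : Continuous (erlangWeight k) := by
  unfold erlangWeight; fun_prop

/-- From `y / x ≤ exp (y / x - 1)`; the sign of the last exponent gives the monotonicity of
`r ^ k * exp (-r)` on either side of `k`. -/
theorem pow_mul_exp_neg_le_mul_exp_s2 (k : ℕ) {x y : ℝ} (hx : 0 < x) (hy : 0 ≤ y) :
    y ^ k * exp (-y) ≤ x ^ k * exp (-x) * exp ((k / x - 1) * (y - x)) := by
  have hratio : (y / x) ^ k ≤ exp (k * (y / x - 1)) := by
    rw [exp_nat_mul]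
    gcongr
    linarith [add_one_le_exp (y / x - 1)]
  calc y ^ k * exp (-y) = x ^ k * (y / x) ^ k * exp (-y) := by
        rw [div_pow, mul_div_cancel₀ _ (by positivity)]
    _ ≤ x ^ k * exp (k * (y / x - 1)) * exp (-y) := by gcongr
    _ = x ^ k * exp (-x) * exp ((k / x - 1) * (y - x)) := by
        rw [mul_assoc, mul_assoc, ← exp_add, ← exp_add]
        congr 2
        field_simp
        ring

theorem erlangWeight_monotoneOn (k : ℕ) : MonotoneOn (erlangWeight k) (Icc 0 k) := by
  rintro a ⟨ha, -⟩ b ⟨-, hbk⟩ hab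
  rcases hab.eq_or_lt with rfl | hab
  · rfl
  have hb : 0 < b := ha.trans_lt hab
  have hexp : exp ((k / b - 1) * (a - b)) ≤ 1 := by
    refine exp_le_one_iff.2 (mul_nonpos_of_nonneg_of_nonpos ?_ (by linarith))
    rw [sub_nonneg, one_le_div hb]
    exact hbk
  have := (pow_mul_exp_neg_le_mul_exp_s2 k hb ha).trans
    (mul_le_of_le_one_right (by positivity) hexp)
  unfold erlangWeight
  rw [div_mul_eq_mul_div, div_mul_eq_mul_div]
  gcongr

theorem erlangWeight_antitoneOn (k : ℕ) : AntitoneOn (erlangWeight k) (Ici k) := by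
  rintro a (hka : (k : ℝ) ≤ a) b - hab
  rcases (k.cast_nonneg.trans hka).eq_or_lt with rfl | ha
  · obtain rfl : k = 0 := by exact_mod_cast le_antisymm hka k.cast_nonneg
    simpa [erlangWeight] using hab
  have hexp : exp ((k / a - 1) * (b - a)) ≤ 1 := by
    refine exp_le_one_iff.2 (mul_nonpos_of_nonpos_of_nonneg ?_ (by linarith))
    rw [sub_nonpos, div_le_one ha]
    exact hka
  have := (pow_mul_exp_neg_le_mul_exp_s2 k ha (ha.le.trans hab)).trans
    (mul_le_of_le_one_right (by positivity) hexp)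
  unfold erlangWeight
  rw [div_mul_eq_mul_div, div_mul_eq_mul_div]
  gcongr

theorem erlangWeight_self_le_half {k : ℕ} (hk : k ≠ 0) : erlangWeight k k ≤ 1 / 2 := by
  have hstirling := Stirling.le_factorial_stirling k
  have htwo : 2 ≤ √(2 * π * k) := by
    rw [le_sqrt (by norm_num) (by positivity)]
    have : (1 : ℝ) ≤ k := by exact_mod_cast Nat.one_le_iff_ne_zero.2 hk
    nlinarith [pi_gt_three]
  rw [div_pow, ← exp_nat_mul, mul_one] at hstirling
  unfold erlangWeight
  rw [div_mul_eq_mul_div, div_le_iff₀ (by positivity), exp_neg, ← div_eq_mul_inv]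
  have hk' : (0 : ℝ) < (k : ℝ) ^ k / exp k := by positivity
  nlinarith

theorem erlangWeight_eq_gammaIntegrand (k : ℕ) :
    erlangWeight k = fun x ↦ (k.factorial : ℝ)⁻¹ * (exp (-x) * x ^ ((k + 1 : ℝ) - 1)) := by
  ext x
  rw [add_sub_cancel_right, rpow_natCast, erlangWeight]
  ring

theorem integrableOn_erlangWeight_Ioi (k : ℕ) : IntegrableOn (erlangWeight k) (Ioi 0) := by
  rw [erlangWeight_eq_gammaIntegrand]
  exact (GammaIntegral_convergent (by positivity)).const_mul _

theorem integral_erlangWeight_Ioi (k : ℕ) : ∫ r in Ioi 0, erlangWeight k r = 1 := by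
  simp_rw [erlangWeight_eq_gammaIntegrand]
  rw [integral_const_mul, ← Gamma_eq_integral (by positivity),
    Gamma_nat_eq_factorial, inv_mul_cancel₀ (by positivity)]

theorem integral_erlangWeight_le_one (k : ℕ) {a b : ℝ} (ha : 0 ≤ a) (hab : a ≤ b) :
    ∫ r in a..b, erlangWeight k r ≤ 1 := by
  rw [intervalIntegral.integral_of_le hab, ← integral_erlangWeight_Ioi k]
  refine setIntegral_mono_set (integrableOn_erlangWeight_Ioi k) ?_
    (Ioc_subset_Ioi_self.trans (Ioi_subset_Ioi ha)).eventuallyLE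
  exact (ae_restrict_iff' measurableSet_Ioi).2
    (.of_forall fun r hr ↦ erlangWeight_nonneg k hr.le)

theorem add_le_integral_add_of_monotoneOn_of_antitoneOn {f : ℝ → ℝ} {a c : ℝ}
    (hac : a ≤ c) (hca : c ≤ a + 1) (hmono : MonotoneOn f (Icc a c))
    (hanti : AntitoneOn f (Icc c (a + 1))) :
    f a + f (a + 1) ≤ (∫ x in a..a + 1, f x) + f c := by
  have hmono' : MonotoneOn f (uIcc a c) := Set.uIcc_of_le hac ▸ hmono
  have hanti' : AntitoneOn f (uIcc c (a + 1)) := Set.uIcc_of_le hca ▸ hanti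
  have hleft : (c - a) * f a ≤ ∫ x in a..c, f x := by
    simpa using intervalIntegral.integral_mono_on (μ := volume) hac intervalIntegrable_const
      hmono'.intervalIntegrable fun x hx ↦ hmono ⟨le_rfl, hac⟩ hx hx.1
  have hright : (a + 1 - c) * f (a + 1) ≤ ∫ x in c..a + 1, f x := by
    simpa using intervalIntegral.integral_mono_on (μ := volume) hca intervalIntegrable_const
      hanti'.intervalIntegrable fun x hx ↦ hanti hx ⟨hca, le_rfl⟩ hx.2
  have hsplit := intervalIntegral.integral_add_adjacent_intervals (μ := volume)
    hmono'.intervalIntegrable hanti'.intervalIntegrable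
  have hfa : f a ≤ f c := hmono ⟨le_rfl, hac⟩ ⟨hac, le_rfl⟩ hac
  have hfb : f (a + 1) ≤ f c := hanti ⟨le_rfl, hca⟩ ⟨hca, le_rfl⟩ hca
  nlinarith [mul_nonneg (sub_nonneg.2 hca) (sub_nonneg.2 hfa),
    mul_nonneg (sub_nonneg.2 hac) (sub_nonneg.2 hfb)]

theorem sum_range_le_of_monotoneOn_of_antitoneOn {f : ℝ → ℝ} {t c B : ℝ} (htc : t ≤ c)
    (hmono : MonotoneOn f (Icc t c)) (hanti : AntitoneOn f (Ici c))
    (hnonneg : ∀ x, t ≤ x → 0 ≤ f x) (hB : ∀ T, t ≤ T → ∫ x in t..T, f x ≤ B) (N : ℕ) :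
    ∑ n ∈ range N, f (t + n) ≤ B + f c := by
  -- The points `t + n` with `n < j` lie left of the mode, `t + j` and `t + j + 1` straddle it.
  set j := ⌊c - t⌋₊
  have hj0 : (0 : ℝ) ≤ j := j.cast_nonneg
  have hjc : t + j ≤ c := by linarith [Nat.floor_le (sub_nonneg.2 htc)]
  have hcj : c ≤ t + j + 1 := by linarith [Nat.lt_floor_add_one (c - t)]
  have hmono_left : MonotoneOn f (Icc t (t + j)) := hmono.mono (Icc_subset_Icc_right hjc)
  have hmono_mid : MonotoneOn f (Icc (t + j) c) :=
    hmono.mono (Icc_subset_Icc_left (le_add_of_nonneg_right hj0))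
  have hanti_mid : AntitoneOn f (Icc c (t + j + 1)) := hanti.mono Icc_subset_Ici_self
  suffices h : ∀ M : ℕ, ∑ n ∈ range (j + 2 + M), f (t + n) ≤ B + f c by
    refine le_trans (sum_le_sum_of_subset_of_nonneg (range_mono (by omega : N ≤ j + 2 + N))
      fun n _ _ ↦ hnonneg _ (by linarith [n.cast_nonneg (α := ℝ)])) (h N)
  intro M
  have hanti_tail : AntitoneOn f (Icc (t + j + 1) (t + j + 1 + M)) :=
    hanti.mono fun x hx ↦ hcj.trans hx.1
  have left := hmono_left.sum_le_integral
  have mid := add_le_integral_add_of_monotoneOn_of_antitoneOn hjc hcj hmono_mid hanti_mid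
  have tail := hanti_tail.sum_le_integral
  have hM0 : (0 : ℝ) ≤ M := M.cast_nonneg
  have hint_left : IntervalIntegrable f volume t (t + j) :=
    (Set.uIcc_of_le (le_add_of_nonneg_right hj0) ▸ hmono_left).intervalIntegrable
  have hint_mid : IntervalIntegrable f volume (t + j) (t + j + 1) :=
    ((Set.uIcc_of_le hjc ▸ hmono_mid).intervalIntegrable).trans
      (Set.uIcc_of_le hcj ▸ hanti_mid).intervalIntegrable
  have hint_tail : IntervalIntegrable f volume (t + j + 1) (t + j + 1 + M) :=
    (Set.uIcc_of_le (le_add_of_nonneg_right hM0) ▸ hanti_tail).intervalIntegrable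
  have htotal := hB (t + j + 1 + M) (by linarith)
  rw [← intervalIntegral.integral_add_adjacent_intervals (hint_left.trans hint_mid) hint_tail,
    ← intervalIntegral.integral_add_adjacent_intervals hint_left hint_mid] at htotal
  have hcast : ∀ i : ℕ, f (t + ↑(j + 2 + i)) = f (t + j + 1 + ↑(i + 1)) := fun i ↦ by
    push_cast; ring_nf
  rw [sum_range_add, sum_congr rfl fun i _ ↦ hcast i, sum_range_succ, sum_range_succ]
  push_cast [← add_assoc] at tail ⊢
  linarith

theorem sum_range_intervalIntegral_eq_integral_sum {f : ℝ → ℝ} (hf : Continuous f) (s : ℝ)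
    (N : ℕ) :
    ∑ n ∈ range N, ∫ r in (n : ℝ)..n + s, f r = ∫ t in 0..s, ∑ n ∈ range N, f (t + n) := by
  rw [intervalIntegral.integral_finsetSum (f := fun (n : ℕ) t ↦ f (t + n)) fun n _ ↦
    (hf.comp (continuous_add_const _)).intervalIntegrable _ _]
  refine sum_congr rfl fun n _ ↦ ?_
  rw [intervalIntegral.integral_comp_add_right (fun r ↦ f r), zero_add, add_comm s]

theorem tsum_intervalIntegral_le_mul {f : ℝ → ℝ} (hf : Continuous f)
    (hf0 : ∀ r, 0 ≤ r → 0 ≤ f r) {s M : ℝ} (hs : 0 ≤ s)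
    (hM : ∀ t ∈ Icc 0 s, ∀ N, ∑ n ∈ range N, f (t + n) ≤ M) :
    ∑' n : ℕ, ∫ r in (n : ℝ)..n + s, f r ≤ s * M := by
  refine Real.tsum_le_of_sum_range_le (fun n ↦ intervalIntegral.integral_nonneg (by linarith)
    fun r hr ↦ hf0 r (n.cast_nonneg.trans hr.1)) fun N ↦ ?_
  rw [sum_range_intervalIntegral_eq_integral_sum hf]
  simpa using intervalIntegral.integral_mono_on (μ := volume) hs
    ((by fun_prop : Continuous fun t ↦ ∑ n ∈ range N, f (t + n)).intervalIntegrable _ _)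
    intervalIntegrable_const fun t ht ↦ hM t ht N

theorem equidistantEigenvalue_eq_tsum (k : ℕ) (s : ℝ) :
    equidistantEigenvalue k s = ∑' n : ℕ, ∫ r in (n : ℝ)..n + s, erlangWeight k r := rfl

theorem equidistantEigenvalue_le_one (k : ℕ) {s : ℝ} (hs0 : 0 ≤ s) (hs1 : s ≤ 1) :
    equidistantEigenvalue k s ≤ 1 := by
  have hint := (continuous_erlangWeight k).intervalIntegrable (μ := volume)
  rw [equidistantEigenvalue_eq_tsum]
  refine Real.tsum_le_of_sum_range_le (fun n ↦ intervalIntegral.integral_nonneg (by linarith)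
    fun r hr ↦ erlangWeight_nonneg k (n.cast_nonneg.trans hr.1)) fun N ↦ ?_
  calc ∑ n ∈ range N, ∫ r in (n : ℝ)..n + s, erlangWeight k r
      ≤ ∑ n ∈ range N, ∫ r in (n : ℝ)..((n + 1 : ℕ) : ℝ), erlangWeight k r := by
        refine sum_le_sum fun n _ ↦ intervalIntegral.integral_mono_interval le_rfl (by linarith)
          (by push_cast; linarith) ?_ (hint _ _)
        exact (ae_restrict_iff' measurableSet_Ioc).2
          (.of_forall fun r hr ↦ erlangWeight_nonneg k (n.cast_nonneg.trans hr.1.le))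
    _ = ∫ r in ((0 : ℕ) : ℝ)..(N : ℝ), erlangWeight k r :=
        intervalIntegral.sum_integral_adjacent_intervals fun n _ ↦ hint _ _
    _ ≤ 1 := integral_erlangWeight_le_one k (by simp) (by simp)

theorem equidistantEigenvalue_zero (s : ℝ) :
    equidistantEigenvalue 0 s = (1 - exp (-s)) * (exp 1 / (exp 1 - 1)) := by
  have hterm (n : ℕ) : ∫ r in (n : ℝ)..n + s, r ^ 0 / (Nat.factorial 0) * exp (-r)
      = exp (-1) ^ n * (1 - exp (-s)) := by
    simp only [pow_zero, Nat.factorial_zero, Nat.cast_one, div_one, one_mul,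
      intervalIntegral.integral_comp_neg, integral_exp, ← exp_nat_mul]
    rw [neg_add, exp_add, mul_neg_one]
    ring
  have hC : (1 - exp (-1))⁻¹ = exp 1 / (exp 1 - 1) := by
    have : exp 1 - 1 ≠ 0 := by linarith [add_one_lt_exp one_ne_zero]
    rw [exp_neg]
    field_simp
  rw [equidistantEigenvalue, tsum_congr hterm, tsum_mul_right,
    tsum_geometric_of_lt_one (exp_pos _).le (exp_lt_one_iff.2 (by norm_num)), hC, mul_comm]

theorem equidistantEigenvalue_le_mul (k : ℕ) {s : ℝ} (hs0 : 0 ≤ s) (hs1 : s ≤ 1) :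
    equidistantEigenvalue k s ≤ exp 1 / (exp 1 - 1) * s := by
  have he : 0 < exp 1 - 1 := by linarith [add_one_lt_exp one_ne_zero]
  rcases eq_or_ne k 0 with rfl | hk
  · rw [equidistantEigenvalue_zero, mul_comm]
    gcongr
    linarith [add_one_le_exp (-s)]
  have hk1 : (1 : ℝ) ≤ k := by exact_mod_cast Nat.one_le_iff_ne_zero.2 hk
  have hsum : ∀ t ∈ Icc 0 s, ∀ N, ∑ n ∈ range N, erlangWeight k (t + n) ≤ 1 + 1 / 2 := by
    rintro t ⟨ht0, hts⟩ N
    refine (sum_range_le_of_monotoneOn_of_antitoneOn (by linarith)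
      ((erlangWeight_monotoneOn k).mono (Icc_subset_Icc_left ht0)) (erlangWeight_antitoneOn k)
      (fun x hx ↦ erlangWeight_nonneg k (ht0.trans hx))
      (fun T hT ↦ integral_erlangWeight_le_one k ht0 hT) N).trans ?_
    linarith [erlangWeight_self_le_half hk]
  calc equidistantEigenvalue k s ≤ s * (1 + 1 / 2) := by
        rw [equidistantEigenvalue_eq_tsum]
        exact tsum_intervalIntegral_le_mul (continuous_erlangWeight k)
          (fun r hr ↦ erlangWeight_nonneg k hr) hs0 hsum
    _ ≤ exp 1 / (exp 1 - 1) * s := by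
        rw [mul_comm]
        gcongr
        rw [le_div_iff₀ he]
        linarith [exp_one_lt_d9]

/-- For `s ∈ [0,1]` and `C = e/(e-1)`, the operator norm satisfies
`(1 - e^{-s})·C ≤ ‖P_{E(s)}‖ ≤ min{C·s, 1}`. -/
theorem equidistant_operator_norm_bounds (s : ℝ) (hs : s ∈ Set.Icc (0 : ℝ) 1) :
    (1 - Real.exp (-s)) * (Real.exp 1 / (Real.exp 1 - 1)) ≤
        (⨆ k : ℕ, equidistantEigenvalue k s) ∧
      (⨆ k : ℕ, equidistantEigenvalue k s) ≤
        min (Real.exp 1 / (Real.exp 1 - 1) * s) 1 := by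
  obtain ⟨hs0, hs1⟩ := hs
  have hbdd : BddAbove (range fun k ↦ equidistantEigenvalue k s) :=
    ⟨1, forall_mem_range.2 fun k ↦ equidistantEigenvalue_le_one k hs0 hs1⟩
  refine ⟨equidistantEigenvalue_zero s ▸ le_ciSup hbdd 0, le_min ?_ ?_⟩
  · exact ciSup_le fun k ↦ equidistantEigenvalue_le_mul k hs0 hs1
  · exact ciSup_le fun k ↦ equidistantEigenvalue_le_one k hs0 hs1
end

section
/- For every integer k ≥ 1, f_k(k) + Σ_{n=0}^∞ f_k(n) < Σ_{n=0}^∞ f_0(n) = e/(e−1), where f_k(r) = (r^k/k!)·e^{-r}. -/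
open Real

/-- `f_k(r) = (r^k/k!) e^{-r}`. -/
noncomputable def fEigen (k : ℕ) (r : ℝ) : ℝ :=
  r ^ k / (Nat.factorial k) * Real.exp (-r)

/-! Since `f_{k+1}' = f_k - f_{k+1}`, each `f_k` increases on `[0, k]` and decreases afterwards,
so comparing the series with `∫₀^∞ f_k = Γ(k+1)/k! = 1` gives `Σ f_k(n) ≤ 1 + f_k(k)`. Stirling's
bound `k! ≥ √(2πk) (k/e)^k` gives `f_k(k) ≤ 1/√(2πk)`, and for `k ≥ 2` we have
`1 + 2/√(4π) < 1 + 1/(e-1) = e/(e-1)`. For `k = 1` this is too weak, and the series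
`Σ n e^{-n} = e/(e-1)^2` is summed exactly. -/

open Set MeasureTheory

theorem tsum_le_apply_add_integral_of_monotoneOn_of_antitoneOn {f : ℝ → ℝ} {a : ℕ}
    (hmono : MonotoneOn f (Icc 0 a)) (hanti : AntitoneOn f (Ici a))
    (hint : IntegrableOn f (Ioi 0)) (hnonneg : ∀ t ∈ Ioi (a : ℝ), 0 ≤ f t) :
    ∑' n : ℕ, f n ≤ f a + ∫ x in Ioi 0, f x := by
  have hint_a : IntegrableOn f (Ioi (a : ℝ)) := hint.mono_set (Ioi_subset_Ioi a.cast_nonneg)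
  have hhead : ∑ i ∈ Finset.range a, f i ≤ ∫ x in (0 : ℝ)..a, f x := by
    simpa using MonotoneOn.sum_le_integral (x₀ := 0) (by simpa using hmono)
  have htail : ∑' n : ℕ, f (n + (a + 1) : ℕ) ≤ ∫ x in Ioi (a : ℝ), f x := by
    simpa only [add_assoc] using hanti.tsum_comp_add_le_integral a hint_a hnonneg
  have hsplit := intervalIntegral.integral_interval_add_Ioi hint hint_a
  rw [← (hanti.summable_of_integrableOn_Ioi hint_a hnonneg).sum_add_tsum_nat_add (a + 1),
    Finset.sum_range_succ]
  linarith

theorem fEigen_nonneg (k : ℕ) {x : ℝ} (hx : 0 ≤ x) : 0 ≤ fEigen k x := by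
  unfold fEigen; positivity

theorem fEigen_succ (k : ℕ) (x : ℝ) : fEigen (k + 1) x = x / (k + 1) * fEigen k x := by
  simp only [fEigen, Nat.factorial_succ, Nat.cast_mul, Nat.cast_succ, pow_succ]
  field_simp

theorem hasDerivAt_fEigen_succ (k : ℕ) (x : ℝ) :
    HasDerivAt (fEigen (k + 1)) (fEigen k x - fEigen (k + 1) x) x := by
  have hpow := (hasDerivAt_pow (k + 1) x).div_const ((k + 1).factorial : ℝ)
  have hexp := (hasDerivAt_neg x).exp
  refine (hpow.mul hexp).congr_deriv ?_
  simp only [fEigen, Nat.factorial_succ, Nat.cast_mul, Nat.cast_succ, Nat.add_sub_cancel]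
  field_simp
  ring

theorem continuous_fEigen (k : ℕ) : Continuous (fEigen k) := by
  unfold fEigen; fun_prop

theorem monotoneOn_fEigen (k : ℕ) : MonotoneOn (fEigen k) (Icc 0 k) := by
  rcases k with _ | k
  · simp [monotoneOn_singleton]
  refine monotoneOn_of_hasDerivWithinAt_nonneg (convex_Icc _ _) (continuous_fEigen _).continuousOn
    (fun x _ => (hasDerivAt_fEigen_succ k x).hasDerivWithinAt) fun x hx => ?_
  rw [interior_Icc] at hx
  rw [fEigen_succ, sub_nonneg]
  refine mul_le_of_le_one_left (fEigen_nonneg k hx.1.le) ?_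
  rw [div_le_one (by positivity)]
  exact_mod_cast hx.2.le

theorem antitoneOn_fEigen (k : ℕ) : AntitoneOn (fEigen k) (Ici k) := by
  rcases k with _ | k
  · intro x _ y _ hxy
    simpa [fEigen] using hxy
  refine antitoneOn_of_hasDerivWithinAt_nonpos (convex_Ici _) (continuous_fEigen _).continuousOn
    (fun x _ => (hasDerivAt_fEigen_succ k x).hasDerivWithinAt) fun x hx => ?_
  rw [interior_Ici, mem_Ioi] at hx
  have hx0 : 0 < x := lt_of_le_of_lt (Nat.cast_nonneg _) hx
  rw [fEigen_succ, sub_nonpos]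
  refine le_mul_of_one_le_left (fEigen_nonneg k hx0.le) ?_
  rw [one_le_div (by positivity)]
  exact_mod_cast hx.le

theorem fEigen_eq_rpow_mul_exp_div (k : ℕ) (x : ℝ) :
    fEigen k x = Real.exp (-x) * x ^ ((k + 1 : ℝ) - 1) / k.factorial := by
  rw [add_sub_cancel_right, Real.rpow_natCast, fEigen]
  ring

theorem integrableOn_fEigen (k : ℕ) : IntegrableOn (fEigen k) (Ioi 0) := by
  rw [show fEigen k = _ from funext (fEigen_eq_rpow_mul_exp_div k)]
  exact (Real.GammaIntegral_convergent (by positivity)).div_const _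

theorem integral_fEigen (k : ℕ) : ∫ x in Ioi 0, fEigen k x = 1 := by
  rw [show fEigen k = _ from funext (fEigen_eq_rpow_mul_exp_div k), integral_div, ← Real.Gamma_eq_integral (by positivity), Real.Gamma_nat_eq_factorial,
    div_self (by positivity)]

theorem tsum_fEigen_le (k : ℕ) : ∑' n : ℕ, fEigen k n ≤ fEigen k k + 1 := by
  simpa only [integral_fEigen] using tsum_le_apply_add_integral_of_monotoneOn_of_antitoneOn
    (monotoneOn_fEigen k) (antitoneOn_fEigen k) (integrableOn_fEigen k)
    fun _ ht => fEigen_nonneg k (lt_of_le_of_lt k.cast_nonneg ht).le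

theorem fEigen_self_le (k : ℕ) (hk : k ≠ 0) : fEigen k k ≤ (√(2 * π * k))⁻¹ := by
  have hstirling := Stirling.le_factorial_stirling k
  have hpos : 0 < (k / Real.exp 1) ^ k := by
    have : (0 : ℝ) < k := by exact_mod_cast Nat.pos_of_ne_zero hk
    positivity
  have hself : fEigen k k = (k / Real.exp 1) ^ k / k.factorial := by
    rw [fEigen, Real.exp_neg, ← Real.exp_one_pow, div_pow]
    ring
  rw [hself, div_le_iff₀ (by positivity), ← div_eq_inv_mul, le_div_iff₀ (by positivity)]
  linarith

theorem fEigen_natCast (k n : ℕ) : fEigen k n = n ^ k / k.factorial * Real.exp (-1) ^ n := by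
  rw [fEigen, ← Real.exp_nat_mul]
  ring_nf

theorem tsum_fEigen_zero : ∑' n : ℕ, fEigen 0 n = Real.exp 1 / (Real.exp 1 - 1) := by
  simp only [fEigen_natCast, pow_zero, Nat.factorial_zero, Nat.cast_one, div_one, one_mul]
  rw [tsum_geometric_of_lt_one (Real.exp_pos _).le (Real.exp_lt_one_iff.mpr (by norm_num)),
    Real.exp_neg]
  have : Real.exp 1 - 1 ≠ 0 := (sub_pos.mpr (Real.one_lt_exp_iff.mpr one_pos)).ne'
  field_simp

theorem tsum_fEigen_one : ∑' n : ℕ, fEigen 1 n = Real.exp 1 / (Real.exp 1 - 1) ^ 2 := by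
  have hr : ‖Real.exp (-1)‖ < 1 := by
    rw [Real.norm_of_nonneg (Real.exp_pos _).le, Real.exp_lt_one_iff]; norm_num
  simp only [fEigen_natCast, pow_one, Nat.factorial_one, Nat.cast_one, div_one]
  rw [tsum_coe_mul_geometric_of_norm_lt_one hr, Real.exp_neg]
  have : Real.exp 1 - 1 ≠ 0 := (sub_pos.mpr (Real.one_lt_exp_iff.mpr one_pos)).ne'
  field_simp

theorem fEigen_one_one_add_tsum_lt :
    fEigen 1 1 + ∑' n : ℕ, fEigen 1 n < Real.exp 1 / (Real.exp 1 - 1) := by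
  have hself : fEigen 1 1 = (Real.exp 1)⁻¹ := by simp [fEigen, Real.exp_neg]
  rw [hself, tsum_fEigen_one]
  have hlo : 2.7 < Real.exp 1 := lt_trans (by norm_num) Real.exp_one_gt_d9
  have hE : 0 < Real.exp 1 - 1 := by linarith
  rw [inv_eq_one_div, div_add_div _ _ (by positivity) (by positivity),
    div_lt_div_iff₀ (by positivity) hE]
  nlinarith [mul_pos (mul_pos (by linarith : (0 : ℝ) < Real.exp 1) hE)
    (by linarith : (0 : ℝ) < Real.exp 1 - 2.7)]

/-- For every integer `k ≥ 1`,
`f_k(k) + Σ_{n=0}^∞ f_k(n) < Σ_{n=0}^∞ f_0(n) = e/(e-1)`. -/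
theorem fEigen_series_bound (k : ℕ) (hk : 1 ≤ k) :
    fEigen k k + ∑' n : ℕ, fEigen k n < Real.exp 1 / (Real.exp 1 - 1) ∧
    ∑' n : ℕ, fEigen 0 n = Real.exp 1 / (Real.exp 1 - 1) := by
  refine ⟨?_, tsum_fEigen_zero⟩
  obtain rfl | hk2 := hk.eq_or_lt
  · exact_mod_cast fEigen_one_one_add_tsum_lt
  have hE : 0 < Real.exp 1 - 1 := by linarith [Real.exp_one_gt_d9]
  have hstirling : 2 * (Real.exp 1 - 1) < √(2 * π * k) := by
    have hk2' : (2 : ℝ) ≤ k := by exact_mod_cast hk2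
    rw [Real.lt_sqrt (by positivity)]
    nlinarith [Real.pi_gt_three, Real.exp_one_lt_d9]
  calc fEigen k k + ∑' n : ℕ, fEigen k n ≤ 2 * fEigen k k + 1 := by linarith [tsum_fEigen_le k]
    _ ≤ 2 * (√(2 * π * k))⁻¹ + 1 := by gcongr; exact fEigen_self_le k (by omega)
    _ < 1 / (Real.exp 1 - 1) + 1 := by
        rw [← div_eq_mul_inv, add_lt_add_iff_right, div_lt_div_iff₀ (by linarith) hE]
        linarith
    _ = Real.exp 1 / (Real.exp 1 - 1) := by field_simp; ring
end

section
/- For every R > 0 and every n ∈ ℕ, the operator norm of the Daubechies localization operator on the n-iterate spherically symmetric Cantor set satisfies sup_{k∈ℕ} ∫_{C_n(πR^2)} (r^k/k!) e^{-r} dr ≤ 2·∫_{C_n(πR^2)} e^{-r} dr; that is, ‖P_{C_n(R^2)}‖_op ≤ 2·λ_0(𝒞_n(R)). -/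
open Real MeasureTheory

/-- The `n`-iterate mid-third Cantor set based in `[0, L]`:
`C₀(L) = [0,L]` and `C_{n+1}(L) = (1/3)·C_n(L) ∪ (2L/3 + (1/3)·C_n(L))`. -/
def cantorIterate : ℕ → ℝ → Set ℝ
  | 0, L => Set.Icc 0 L
  | n + 1, L =>
      (fun x => x / 3) '' cantorIterate n L ∪
        (fun x => 2 * L / 3 + x / 3) '' cantorIterate n L

/-!
Write `avg_S p` for the `e^{-r} dr`-average of `p` over `S`; comparisons of averages are stated
cross-multiplied, so that no division occurs. For `p` monotone on `[0, ∞)`, the average over the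
Cantor set `C_n(ℓ)` is at most the average over `[0, 2ℓ]`. Induct on `n` with `ℓ = 3m`:
`C_{n+1}(3m)` is `C_n(m)` together with its translate by `2m`, and a translate by `c` carries the
same density up to the factor `e^{-c}`. So the induction hypothesis, applied to `p` and to
`p(2m + ·)`, bounds `avg_{C_{n+1}(3m)} p` by `avg_{[0,4m]} p`, which is at most `avg_{[0,6m]} p`
since `p` is monotone. For `p = r^k/k!`, `∫₀ᵀ p e^{-r} dr` is at most `min(1, ∫₀ᵀ e^{-r} dr)`, and
`∫₀ᵀ e^{-r} dr ≥ 1/2` once `T ≥ 1`, so `avg_{[0,T]} p ≤ 2`.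
-/

open Set
open scoped Nat

theorem interval_average_le_of_monotoneOn {p w : ℝ → ℝ} {a t T : ℝ}
    (hp : Continuous p) (hw : Continuous w) (hmono : MonotoneOn p (Icc a T))
    (hw_nonneg : ∀ u ∈ Icc a T, 0 ≤ w u) (hat : a ≤ t) (htT : t ≤ T) :
    (∫ u in a..T, w u) * ∫ u in a..t, p u * w u ≤
      (∫ u in a..T, p u * w u) * ∫ u in a..t, w u := by
  have hpw : Continuous fun u => p u * w u := hp.mul hw
  rw [← intervalIntegral.integral_add_adjacent_intervals (hw.intervalIntegrable a t)
      (hw.intervalIntegrable t T),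
    ← intervalIntegral.integral_add_adjacent_intervals (hpw.intervalIntegrable a t)
      (hpw.intervalIntegrable t T)]
  have hleft : ∫ u in a..t, p u * w u ≤ p t * ∫ u in a..t, w u := by
    rw [← intervalIntegral.integral_const_mul]
    refine intervalIntegral.integral_mono_on hat (hpw.intervalIntegrable a t)
      ((hw.intervalIntegrable a t).const_mul _) fun u hu => ?_
    have hu' : u ∈ Icc a T := ⟨hu.1, hu.2.trans htT⟩
    exact mul_le_mul_of_nonneg_right (hmono hu' ⟨hat, htT⟩ hu.2) (hw_nonneg u hu')
  have hright : p t * ∫ u in t..T, w u ≤ ∫ u in t..T, p u * w u := by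
    rw [← intervalIntegral.integral_const_mul]
    refine intervalIntegral.integral_mono_on htT ((hw.intervalIntegrable t T).const_mul _)
      (hpw.intervalIntegrable t T) fun u hu => ?_
    have hu' : u ∈ Icc a T := ⟨hat.trans hu.1, hu.2⟩
    exact mul_le_mul_of_nonneg_right (hmono ⟨hat, htT⟩ hu' hu.1) (hw_nonneg u hu')
  have hw_left : 0 ≤ ∫ u in a..t, w u :=
    intervalIntegral.integral_nonneg hat fun u hu => hw_nonneg u ⟨hu.1, hu.2.trans htT⟩
  have hw_right : 0 ≤ ∫ u in t..T, w u :=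
    intervalIntegral.integral_nonneg htT fun u hu => hw_nonneg u ⟨hat.trans hu.1, hu.2⟩
  nlinarith [mul_le_mul_of_nonneg_left hleft hw_right, mul_le_mul_of_nonneg_right hright hw_left]

theorem integral_pow_div_factorial_mul_exp_neg_le (k : ℕ) {T : ℝ} (hT : 0 ≤ T) :
    ∫ u in (0 : ℝ)..T, u ^ k / k ! * exp (-u) ≤ 2 * ∫ u in (0 : ℝ)..T, exp (-u) := by
  rcases le_total T 1 with hT1 | hT1
  · have hle : ∫ u in (0 : ℝ)..T, u ^ k / k ! * exp (-u) ≤ ∫ u in (0 : ℝ)..T, exp (-u) := by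
      refine intervalIntegral.integral_mono_on hT (Continuous.intervalIntegrable (by fun_prop) _ _)
        (Continuous.intervalIntegrable (by fun_prop) _ _) fun u hu => ?_
      have hpow : u ^ k / k ! ≤ 1 :=
        div_le_one_of_le₀ ((pow_le_one₀ hu.1 (hu.2.trans hT1)).trans
          (Nat.one_le_cast.mpr k.factorial_pos)) (by positivity)
      exact mul_le_of_le_one_left (exp_pos _).le hpow
    have hexp_nonneg : 0 ≤ ∫ u in (0 : ℝ)..T, exp (-u) :=
      intervalIntegral.integral_nonneg hT fun u _ => (exp_pos _).le
    linarith
  · have hmass : ∫ u in (0 : ℝ)..T, u ^ k / k ! * exp (-u) ≤ 1 := by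
      have h := intervalIntegral_pow_mul_exp_neg_le (k := k) hT one_pos
      simp only [one_mul, one_pow, div_one] at h
      calc ∫ u in (0 : ℝ)..T, u ^ k / k ! * exp (-u)
          = (∫ u in (0 : ℝ)..T, u ^ k * exp (-u)) / k ! := by
            rw [← intervalIntegral.integral_div]
            congr 1
            ext u
            ring
        _ ≤ 1 := div_le_one_of_le₀ h (by positivity)
    have hexp_T : exp (-T) ≤ 1 / 2 := by
      calc exp (-T) ≤ exp (-1) := exp_le_exp.mpr (by linarith)
        _ ≤ 1 / 2 := by
          rw [exp_neg, inv_le_comm₀ (exp_pos 1) (by norm_num)]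
          linarith [add_one_le_exp 1]
    have hexp : ∫ u in (0 : ℝ)..T, exp (-u) = 1 - exp (-T) := by
      simp [intervalIntegral.integral_comp_neg]
    linarith

theorem setIntegral_union_image_add_mul_exp_neg {s : Set ℝ} (hs : IsCompact s) {c : ℝ}
    (hdisj : Disjoint s ((c + ·) '' s)) {p : ℝ → ℝ} (hp : Continuous p) :
    ∫ r in s ∪ (c + ·) '' s, p r * exp (-r) =
      (∫ r in s, p r * exp (-r)) + exp (-c) * ∫ r in s, p (c + r) * exp (-r) := by
  have hcont : Continuous fun r => p r * exp (-r) := by fun_prop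
  have hs' : IsCompact ((c + ·) '' s) := hs.image (continuous_const_add c)
  have hshift : ∫ r in s, p (c + r) * exp (-(c + r)) =
      exp (-c) * ∫ r in s, p (c + r) * exp (-r) := by
    simp only [← integral_const_mul, neg_add, exp_add, mul_left_comm (exp (-c))]
  rw [setIntegral_union hdisj hs'.measurableSet (hcont.continuousOn.integrableOn_compact hs)
      (hcont.continuousOn.integrableOn_compact hs'),
    (measurePreserving_add_left volume c).setIntegral_image_emb (measurableEmbedding_addLeft c),
    hshift]

theorem intervalIntegral_zero_two_mul_mul_exp_neg {p : ℝ → ℝ} (hp : Continuous p) (c : ℝ) :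
    ∫ u in (0 : ℝ)..2 * c, p u * exp (-u) =
      (∫ u in (0 : ℝ)..c, p u * exp (-u)) + exp (-c) * ∫ u in (0 : ℝ)..c, p (c + u) * exp (-u) := by
  have hcont : Continuous fun r => p r * exp (-r) := by fun_prop
  have hshift : ∫ u in (0 : ℝ)..c, p (c + u) * exp (-(c + u)) =
      exp (-c) * ∫ u in (0 : ℝ)..c, p (c + u) * exp (-u) := by
    simp only [← intervalIntegral.integral_const_mul, neg_add, exp_add, mul_left_comm (exp (-c))]
  rw [← hshift, intervalIntegral.integral_comp_add_left (fun r => p r * exp (-r)) c, add_zero,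
    two_mul]
  exact (intervalIntegral.integral_add_adjacent_intervals (hcont.intervalIntegrable 0 c)
    (hcont.intervalIntegrable c (c + c))).symm

theorem cantorIterate_subset_Icc (n : ℕ) (L : ℝ) : cantorIterate n L ⊆ Icc 0 L := by
  induction n with
  | zero => exact subset_rfl
  | succ n ih =>
    rintro y (⟨x, hx, rfl⟩ | ⟨x, hx, rfl⟩) <;>
    · obtain ⟨hx0, hxL⟩ := ih hx
      constructor <;> linarith

theorem isCompact_cantorIterate (n : ℕ) (L : ℝ) : IsCompact (cantorIterate n L) := by
  induction n with
  | zero => exact isCompact_Icc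
  | succ n ih => exact (ih.image (by fun_prop)).union (ih.image (by fun_prop))

theorem image_div_three_cantorIterate (n : ℕ) (L : ℝ) :
    (· / 3) '' cantorIterate n L = cantorIterate n (L / 3) := by
  induction n generalizing L with
  | zero =>
    simpa [cantorIterate, div_eq_mul_inv] using
      image_mul_right_Icc' (0 : ℝ) L (by norm_num : (0 : ℝ) < 3⁻¹)
  | succ n ih =>
    simp only [cantorIterate, image_union, ← ih, image_image]
    congr 2
    ext x
    ring

theorem cantorIterate_succ_three_mul (n : ℕ) (m : ℝ) :
    cantorIterate (n + 1) (3 * m) = cantorIterate n m ∪ (2 * m + ·) '' cantorIterate n m := by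
  have hscale : (· / 3) '' cantorIterate n (3 * m) = cantorIterate n m := by
    rw [image_div_three_cantorIterate, mul_div_cancel_left₀ m three_ne_zero]
  rw [cantorIterate, hscale]
  congr 1
  rw [← hscale, image_image]
  congr 1
  ext x
  ring

theorem disjoint_cantorIterate_image_add {n : ℕ} {m : ℝ} (hm : 0 < m) :
    Disjoint (cantorIterate n m) ((2 * m + ·) '' cantorIterate n m) := by
  refine disjoint_left.mpr ?_
  rintro _ hx ⟨y, hy, rfl⟩
  linarith [(cantorIterate_subset_Icc n m hx).2, (cantorIterate_subset_Icc n m hy).1]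

theorem average_cantorIterate_le_interval_average (n : ℕ) {p : ℝ → ℝ} (hp : Continuous p)
    (hmono : MonotoneOn p (Ici 0)) {ℓ : ℝ} (hℓ : 0 < ℓ) :
    (∫ u in (0 : ℝ)..2 * ℓ, exp (-u)) * ∫ r in cantorIterate n ℓ, p r * exp (-r) ≤
      (∫ u in (0 : ℝ)..2 * ℓ, p u * exp (-u)) * ∫ r in cantorIterate n ℓ, exp (-r) := by
  induction n generalizing p ℓ with
  | zero =>
    simp only [cantorIterate, integral_Icc_eq_integral_Ioc,
      ← intervalIntegral.integral_of_le hℓ.le]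
    exact interval_average_le_of_monotoneOn hp (by fun_prop)
      (hmono.mono Icc_subset_Ici_self) (fun u _ => (exp_pos _).le) hℓ.le (by linarith)
  | succ n ih =>
    obtain ⟨m, hm, rfl⟩ : ∃ m, 0 < m ∧ ℓ = 3 * m := ⟨ℓ / 3, by positivity, by ring⟩
    have h₁ := ih hp hmono hm
    have h₂ := ih (p := fun r => p (2 * m + r)) (by fun_prop) (fun x hx y hy hxy =>
      hmono (add_nonneg (by positivity : (0 : ℝ) ≤ 2 * m) hx)
        (add_nonneg (by positivity : (0 : ℝ) ≤ 2 * m) hy) (by linarith)) hm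
    have hratio := interval_average_le_of_monotoneOn (w := fun u => exp (-u))
      (t := 2 * (2 * m)) (T := 2 * (3 * m)) hp (by fun_prop) (hmono.mono Icc_subset_Ici_self)
      (fun u _ => (exp_pos _).le) (by positivity) (by linarith)
    have hC := isCompact_cantorIterate n m
    have hdisj := disjoint_cantorIterate_image_add (n := n) hm
    have hweight := setIntegral_union_image_add_mul_exp_neg hC hdisj (p := fun _ => 1)
      continuous_const
    have hP₄ := intervalIntegral_zero_two_mul_mul_exp_neg (p := fun _ => 1) continuous_const (2 * m)
    simp only [one_mul] at hweight hP₄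
    rw [intervalIntegral_zero_two_mul_mul_exp_neg hp, hP₄] at hratio
    rw [cantorIterate_succ_three_mul, setIntegral_union_image_add_mul_exp_neg hC hdisj hp, hweight]
    set q := exp (-(2 * m))
    set P := ∫ u in (0 : ℝ)..2 * m, exp (-u)
    set P₆ := ∫ u in (0 : ℝ)..2 * (3 * m), exp (-u)
    set Y := ∫ r in cantorIterate n m, exp (-r)
    have hP : 0 < P := intervalIntegral.intervalIntegral_pos_of_pos
      (Continuous.intervalIntegrable (by fun_prop) _ _) (fun _ => exp_pos _) (by linarith)
    have hP₆ : 0 ≤ P₆ := intervalIntegral.integral_nonneg (by positivity) fun u _ => (exp_pos _).le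
    have hY : 0 ≤ Y := setIntegral_nonneg hC.measurableSet fun r _ => (exp_pos _).le
    refine le_of_mul_le_mul_left ?_ hP
    calc _ = P₆ * (P * (∫ r in cantorIterate n m, p r * exp (-r)) +
            q * (P * ∫ r in cantorIterate n m, p (2 * m + r) * exp (-r))) := by ring
      _ ≤ P₆ * ((∫ u in (0 : ℝ)..2 * m, p u * exp (-u)) * Y +
            q * ((∫ u in (0 : ℝ)..2 * m, p (2 * m + u) * exp (-u)) * Y)) := by gcongr
      _ = P₆ * ((∫ u in (0 : ℝ)..2 * m, p u * exp (-u)) +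
            q * ∫ u in (0 : ℝ)..2 * m, p (2 * m + u) * exp (-u)) * Y := by ring
      _ ≤ (∫ u in (0 : ℝ)..2 * (3 * m), p u * exp (-u)) * (P + q * P) * Y := by gcongr
      _ = _ := by ring

/-- The operator norm of the Daubechies localization operator on the `n`-iterate
spherically symmetric Cantor set is at most twice the first eigenvalue:
`sup_k ∫_{C_n(πR²)} (r^k/k!)e^{-r} dr ≤ 2·∫_{C_n(πR²)} e^{-r} dr`. -/
theorem cantor_operator_norm_le_two_lambda_zero (R : ℝ) (hR : 0 < R) (n : ℕ) :
    (⨆ k : ℕ, ∫ r in cantorIterate n (π * R ^ 2),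
        r ^ k / (Nat.factorial k) * Real.exp (-r)) ≤
      2 * ∫ r in cantorIterate n (π * R ^ 2), Real.exp (-r) := by
  have hL : 0 < π * R ^ 2 := by positivity
  have hP : 0 < ∫ u in (0 : ℝ)..2 * (π * R ^ 2), exp (-u) :=
    intervalIntegral.intervalIntegral_pos_of_pos (Continuous.intervalIntegrable (by fun_prop) _ _)
      (fun _ => exp_pos _) (by positivity)
  have hY : 0 ≤ ∫ r in cantorIterate n (π * R ^ 2), exp (-r) :=
    setIntegral_nonneg (isCompact_cantorIterate n _).measurableSet fun r _ => (exp_pos _).le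
  refine ciSup_le fun k => le_of_mul_le_mul_left ?_ hP
  have hmono : MonotoneOn (fun r : ℝ => r ^ k / k !) (Ici 0) := fun x hx y _ hxy =>
    div_le_div_of_nonneg_right (pow_le_pow_left₀ hx hxy k) (by positivity)
  calc _ ≤ (∫ u in (0 : ℝ)..2 * (π * R ^ 2), u ^ k / k ! * exp (-u)) *
        ∫ r in cantorIterate n (π * R ^ 2), exp (-r) :=
        average_cantorIterate_le_interval_average n (by fun_prop) hmono hL
    _ ≤ (2 * ∫ u in (0 : ℝ)..2 * (π * R ^ 2), exp (-u)) *
        ∫ r in cantorIterate n (π * R ^ 2), exp (-r) := by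
        gcongr
        exact integral_pow_div_factorial_mul_exp_neg_le k (by positivity)
    _ = _ := by ring
end

section
/- There exist positive finite constants c_1 ≤ c_2 such that for every n ∈ ℕ and every L = πR^2 with 0 < L ≤ 3^n/2: c_1 ≤ (2L+1)^{ln 2/ln 3} / (2^n·(1 − e^{-L/3^n})) · sup_{k∈ℕ} ∫_{C_n(L)} (r^k/k!) e^{-r} dr ≤ c_2. That is, the operator norm ‖P_{C_n(R^2)}‖_op is comparable, uniformly in n and R with πR^2 ∈ (0, 3^n/2], to 2^n(1−e^{-πR^2/3^n})·(2πR^2+1)^{-ln2/ln3}. -/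
/-!
Write `λ_k = ∫_{C_n(L)} f_k` with `f_k(r) = r^k e^{-r} / k!`, put `ℓ = L / 3^n ≤ 1/2`, so
that `1 - e^{-ℓ} ≍ ℓ`, and choose `j` with `3^j ≤ max 1 L < 3^{j+1}`, so that
`(2L+1)^{log 2 / log 3} ≍ 2^j`. It then suffices to show `sup_k λ_k ≍ 2^n ℓ / 2^j`.

Upper bound: the `2^j` pieces of generation `j` of `C_n(L)` are separated by gaps of length
`L / 3^j ≥ 1`, so a unit window meets `C_n(L)` in measure at most
`|C_n(L)| / 2^j = 2^n ℓ / 2^j`. Since `f_k` is unimodal with maximum `≤ 1` and total mass `1`,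
summing over unit windows gives `λ_k ≤ 3 · 2^n ℓ / 2^j`.

Lower bound: `C_n(L)` contains the rescaled copy `C_{n-p}(L / 3^p) ⊆ [0, 1]`, `p = min (j+1) n`,
on which `e^{-r} ≥ e^{-1}`; hence `λ_0 ≥ e^{-1} · 2^n ℓ / 2^{j+1}`.
-/

open Real MeasureTheory

open Set
open scoped Nat

theorem measurableSet_cantorIterate (n : ℕ) (L : ℝ) : MeasurableSet (cantorIterate n L) :=
  (isCompact_cantorIterate n L).isClosed.measurableSet

theorem image_div_cantorIterate {a : ℝ} (ha : 0 < a) (n : ℕ) (L : ℝ) :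
    (· / a) '' cantorIterate n L = cantorIterate n (L / a) := by
  induction n with
  | zero =>
    simp only [cantorIterate, div_eq_mul_inv]
    rw [image_mul_right_Icc' _ _ (inv_pos.2 ha), zero_mul]
  | succ n ih =>
    simp only [cantorIterate, image_union, image_image, ← ih]
    exact congrArg₂ (· ∪ ·) (image_congr fun x _ => by ring) (image_congr fun x _ => by ring)

theorem cantorIterate_succ (n : ℕ) (L : ℝ) :
    cantorIterate (n + 1) L =
      cantorIterate n (L / 3) ∪ (2 * L / 3 + ·) '' cantorIterate n (L / 3) := by
  rw [cantorIterate, ← image_div_cantorIterate three_pos, image_image]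

theorem volume_image_const_add (c : ℝ) (s : Set ℝ) : volume ((c + ·) '' s) = volume s := by
  rw [image_add_left, measure_preimage_add]

theorem volume_cantorIterate (n : ℕ) (L : ℝ) :
    volume (cantorIterate n L) = ENNReal.ofReal ((2 / 3) ^ n * L) := by
  induction n generalizing L with
  | zero => simp [cantorIterate]
  | succ n ih =>
    rcases le_or_gt L 0 with hL | hL
    · have h := measure_mono (μ := volume) (cantorIterate_subset_Icc (n + 1) L)
      rw [Real.volume_Icc, ENNReal.ofReal_of_nonpos (by linarith), nonpos_iff_eq_zero] at h
      rw [h, ENNReal.ofReal_of_nonpos (mul_nonpos_of_nonneg_of_nonpos (by positivity) hL)]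
    have hdisj :
        Disjoint (cantorIterate n (L / 3)) ((2 * L / 3 + ·) '' cantorIterate n (L / 3)) := by
      refine disjoint_left.2 fun x hx ⟨y, hy, hyx⟩ => ?_
      have := (cantorIterate_subset_Icc n _ hx).2
      have := (cantorIterate_subset_Icc n _ hy).1
      linarith
    rw [cantorIterate_succ, measure_union hdisj
      ((isCompact_cantorIterate n _).image (by fun_prop)).isClosed.measurableSet,
      volume_image_const_add, ih, ← ENNReal.ofReal_add (by positivity) (by positivity)]
    ring_nf

theorem cantorIterate_div_pow_subset (m p : ℕ) (L : ℝ) :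
    cantorIterate m (L / 3 ^ p) ⊆ cantorIterate (m + p) L := by
  induction p generalizing L with
  | zero => simp
  | succ p ih =>
    rw [pow_succ', ← div_div, ← add_assoc, cantorIterate_succ]
    exact (ih (L / 3)).trans subset_union_left

theorem volume_cantorIterate_inter_Ico_le (q j : ℕ) {L : ℝ} (hj : (3 : ℝ) ^ j ≤ max 1 L)
    (x : ℝ) :
    volume (cantorIterate q L ∩ Ico x (x + 1)) ≤ ENNReal.ofReal ((2 / 3) ^ q * L / 2 ^ j) := by
  induction q generalizing L x j with
  | zero =>
    have h2j : (2 : ℝ) ^ j ≤ max 1 L :=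
      (pow_le_pow_left₀ (by norm_num) (by norm_num) j).trans hj
    rcases le_total 1 L with hL | hL
    · rw [max_eq_right hL] at h2j
      refine (measure_mono inter_subset_right).trans ?_
      rw [Real.volume_Ico]
      exact ENNReal.ofReal_le_ofReal (by rw [le_div_iff₀ (by positivity)]; linarith)
    · rw [max_eq_left hL] at h2j
      have h2j' : (2 : ℝ) ^ j = 1 := le_antisymm h2j (one_le_pow₀ (by norm_num))
      refine (measure_mono inter_subset_left).trans ?_
      simp [cantorIterate, h2j']
  | succ q ih =>
    cases j with
    | zero =>
      refine (measure_mono inter_subset_left).trans ?_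
      simp [volume_cantorIterate]
    | succ j =>
      have h3j : (1 : ℝ) ≤ 3 ^ j := one_le_pow₀ (by norm_num)
      have hL : 3 * 3 ^ j ≤ L := by
        rw [← pow_succ']
        exact (le_max_iff.1 hj).resolve_left (by rw [pow_succ]; linarith)
      have hpiece (y : ℝ) : volume (cantorIterate q (L / 3) ∩ Ico y (y + 1)) ≤
          ENNReal.ofReal ((2 / 3) ^ (q + 1) * L / 2 ^ (j + 1)) := by
        convert ih j (L := L / 3) (le_max_of_le_right (by linarith)) y using 2
        ring
      rw [cantorIterate_succ]
      -- the two halves are `L / 3 ≥ 1` apart, so a unit window meets only one of them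
      rcases le_or_gt (x + 1) (2 * L / 3) with hx | hx
      · refine (measure_mono ?_).trans (hpiece x)
        rintro y ⟨hy | ⟨z, hz, rfl⟩, hyx⟩
        · exact ⟨hy, hyx⟩
        · exact absurd hyx.2 (by linarith [(cantorIterate_subset_Icc q _ hz).1])
      · calc _ ≤ volume ((2 * L / 3 + ·) '' (cantorIterate q (L / 3) ∩
                Ico (x - 2 * L / 3) (x - 2 * L / 3 + 1))) := measure_mono ?_
          _ ≤ _ := by rw [volume_image_const_add]; exact hpiece _
        rintro y ⟨hy | ⟨z, hz, rfl⟩, hy1, hy2⟩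
        · exact absurd hy1 (by linarith [(cantorIterate_subset_Icc q _ hy).2])
        · exact ⟨z, ⟨hz, by linarith, by linarith⟩, rfl⟩

theorem setIntegral_eq_sum_inter_Ico {μ : Measure ℝ} {f : ℝ → ℝ} {C : Set ℝ} {N : ℕ}
    (hC : MeasurableSet C) (hCN : C ⊆ Ico 0 N) (hf : IntegrableOn f C μ) :
    ∫ x in C, f x ∂μ =
      ∑ i ∈ Finset.range N, ∫ x in C ∩ Ico (i : ℝ) (i + 1), f x ∂μ := by
  have hcover : C = ⋃ i ∈ Finset.range N, C ∩ Ico (i : ℝ) (i + 1) := by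
    rw [← inter_iUnion₂, eq_comm, inter_eq_left]
    refine hCN.trans ?_
    simpa using Ico_subset_biUnion_Ico N (fun i : ℕ => (i : ℝ))
  conv_lhs => rw [hcover]
  refine integral_biUnion_finset _ (fun i _ => hC.inter measurableSet_Ico)
    (fun i _ j _ hij => ?_) (fun i _ => hf.mono_set inter_subset_left)
  simpa using (Nat.mono_cast.pairwise_disjoint_on_Ico_succ hij).mono
    (inter_subset_right (s := C)) (inter_subset_right (s := C))

theorem setIntegral_le_mul_of_le {X : Type*} [MeasurableSpace X] {μ : Measure X} {f : X → ℝ}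
    {s : Set X} {M B : ℝ} (hs : MeasurableSet s) (hf : IntegrableOn f s μ) (hμ : μ s ≤ ENNReal.ofReal B)
    (hB : 0 ≤ B) (hM : 0 ≤ M) (hfM : ∀ x ∈ s, f x ≤ M) :
    ∫ x in s, f x ∂μ ≤ M * B :=
  calc ∫ x in s, f x ∂μ ≤ ∫ _ in s, M ∂μ :=
        setIntegral_mono_on hf (integrableOn_const (hμ.trans_lt ENNReal.ofReal_lt_top).ne) hs hfM
    _ = μ.real s * M := by rw [setIntegral_const, smul_eq_mul]
    _ ≤ M * B := by
        rw [mul_comm]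
        exact mul_le_mul_of_nonneg_left (ENNReal.toReal_le_of_le_ofReal hB hμ) hM

theorem sum_le_integral_of_unimodal {f : ℝ → ℝ} {m N : ℕ}
    (hmono : MonotoneOn f (Icc 0 m)) (hanti : AntitoneOn f (Icc m (m + N)))
    (h0 : 0 ≤ f 0) (hN : 0 ≤ f (m + N)) :
    ∑ i ∈ Finset.range m, f (i + 1) + ∑ i ∈ Finset.range N, f (m + i) ≤
      2 * f m + ∫ x in (0 : ℝ)..m + N, f x := by
  have hleft : ∑ i ∈ Finset.range m, f (i + 1) + f 0 = ∑ i ∈ Finset.range m, f i + f m := by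
    have h1 := Finset.sum_range_succ' (fun i : ℕ => f i) m
    have h2 := Finset.sum_range_succ (fun i : ℕ => f i) m
    push_cast at h1 h2
    rw [← h1, h2]
  have hright : ∑ i ∈ Finset.range N, f (m + i) + f (m + N) =
      f m + ∑ i ∈ Finset.range N, f (m + (i + 1 : ℕ)) := by
    rw [← Finset.sum_range_succ (fun i : ℕ => f (m + i)), Finset.sum_range_succ', add_comm]
    simp
  have hsumL : ∑ i ∈ Finset.range m, f i ≤ ∫ x in (0 : ℝ)..m, f x := by
    simpa using (show MonotoneOn f (Icc 0 (0 + m)) by simpa using hmono).sum_le_integral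
  have hsumR := hanti.sum_le_integral
  rw [← intervalIntegral.integral_add_adjacent_intervals
    (hmono.mono (uIcc_of_le (Nat.cast_nonneg m)).subset).intervalIntegrable
    (hanti.mono (uIcc_of_le (by simp)).subset).intervalIntegrable]
  linarith

/-- On `[i, i + 1)` bound `f` by its value at the endpoint nearer to the mode `m`; by monotonicity
these values sum to at most `∫ f` plus two copies of `f m`. -/
theorem setIntegral_le_of_unimodal {f : ℝ → ℝ} {m N : ℕ} {C : Set ℝ} {B : ℝ}
    (hf : IntegrableOn f (Ioi 0)) (hf0 : ∀ x, 0 ≤ x → 0 ≤ f x)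
    (hmono : MonotoneOn f (Icc 0 m)) (hanti : AntitoneOn f (Ici m))
    (hC : MeasurableSet C) (hCN : C ⊆ Ico 0 N) (hB : 0 ≤ B)
    (hwin : ∀ i : ℕ, volume (C ∩ Ico (i : ℝ) (i + 1)) ≤ ENNReal.ofReal B) :
    ∫ x in C, f x ≤ (2 * f m + ∫ x in Ioi 0, f x) * B := by
  have hfC : IntegrableOn f C :=
    ((integrableOn_Ici_iff_integrableOn_Ioi (by simp)).2 hf).mono_set
      (hCN.trans Ico_subset_Ici_self)
  have hwindow (i : ℕ) (M : ℝ) (hM : ∀ x ∈ Ico (i : ℝ) (i + 1), f x ≤ M) :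
      ∫ x in C ∩ Ico (i : ℝ) (i + 1), f x ≤ M * B :=
    setIntegral_le_mul_of_le (hC.inter measurableSet_Ico) (hfC.mono_set inter_subset_left)
      (hwin i) hB ((hf0 i i.cast_nonneg).trans (hM i (by simp))) fun x hx => hM x hx.2
  rw [setIntegral_eq_sum_inter_Ico (N := m + N) hC
    (hCN.trans (Ico_subset_Ico_right (by simp))) hfC, Finset.sum_range_add]
  calc _ ≤ ∑ i ∈ Finset.range m, f (i + 1) * B + ∑ i ∈ Finset.range N, f (m + i) * B := by
        gcongr with i hi i
        · have hi' : (i : ℝ) + 1 ≤ m := by exact_mod_cast Finset.mem_range.1 hi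
          exact hwindow i _ fun x hx => hmono ⟨i.cast_nonneg.trans hx.1, by linarith [hx.2]⟩
            ⟨by positivity, hi'⟩ hx.2.le
        · refine hwindow (m + i) _ fun x hx => ?_
          rw [Nat.cast_add] at hx
          exact hanti (by simp) (by simp only [mem_Ici]; linarith [hx.1, i.cast_nonneg (α := ℝ)])
            hx.1
    _ = (∑ i ∈ Finset.range m, f (i + 1) + ∑ i ∈ Finset.range N, f (m + i)) * B := by
        rw [add_mul, Finset.sum_mul, Finset.sum_mul]
    _ ≤ (2 * f m + ∫ x in (0 : ℝ)..m + N, f x) * B := by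
        refine mul_le_mul_of_nonneg_right ?_ hB
        exact sum_le_integral_of_unimodal hmono (hanti.mono Icc_subset_Ici_self)
          (hf0 0 le_rfl) (hf0 _ (by positivity))
    _ ≤ (2 * f m + ∫ x in Ioi 0, f x) * B := by
        gcongr
        rw [intervalIntegral.integral_of_le (by positivity)]
        exact setIntegral_mono_set hf ((ae_restrict_iff' measurableSet_Ioi).2
          (Filter.Eventually.of_forall fun x hx => hf0 x hx.le)) Ioc_subset_Ioi_self.eventuallyLE

noncomputable def erlangDensity (k : ℕ) (r : ℝ) : ℝ := r ^ k / k ! * exp (-r)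

theorem erlangDensity_def (k : ℕ) (r : ℝ) : erlangDensity k r = r ^ k / k ! * exp (-r) := rfl

@[simp]
theorem erlangDensity_zero (r : ℝ) : erlangDensity 0 r = exp (-r) := by
  simp [erlangDensity]

theorem erlangDensity_nonneg (k : ℕ) {r : ℝ} (hr : 0 ≤ r) : 0 ≤ erlangDensity k r := by
  unfold erlangDensity; positivity

theorem erlangDensity_le_one (k : ℕ) {r : ℝ} (hr : 0 ≤ r) : erlangDensity k r ≤ 1 :=
  calc erlangDensity k r ≤ exp r * exp (-r) :=
        mul_le_mul_of_nonneg_right (pow_div_factorial_le_exp r hr k) (exp_pos _).le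
    _ = 1 := by rw [← exp_add, add_neg_cancel, exp_zero]

theorem hasDerivAt_erlangDensity (k : ℕ) (r : ℝ) :
    HasDerivAt (erlangDensity k) ((k * r ^ (k - 1) - r ^ k) / k ! * exp (-r)) r :=
  (((hasDerivAt_pow k r).div_const (k ! : ℝ)).mul (hasDerivAt_neg r).exp).congr_deriv (by ring)

theorem monotoneOn_erlangDensity (k : ℕ) : MonotoneOn (erlangDensity k) (Icc 0 k) := by
  refine monotoneOn_of_deriv_nonneg (convex_Icc _ _)
    (fun r _ => (hasDerivAt_erlangDensity k r).continuousAt.continuousWithinAt)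
    (fun r _ => (hasDerivAt_erlangDensity k r).differentiableAt.differentiableWithinAt)
    fun r hr => ?_
  rw [interior_Icc] at hr
  obtain ⟨k, rfl⟩ : ∃ j, k = j + 1 :=
    Nat.exists_eq_add_one.2 (by exact_mod_cast hr.1.trans hr.2)
  rw [(hasDerivAt_erlangDensity _ r).deriv, add_tsub_cancel_right, pow_succ]
  have : (0 : ℝ) ≤ r ^ k := pow_nonneg hr.1.le k
  have : r ≤ (k + 1 : ℕ) := hr.2.le
  apply mul_nonneg (div_nonneg ?_ (by positivity)) (exp_pos _).le
  push_cast at this ⊢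
  nlinarith

theorem antitoneOn_erlangDensity (k : ℕ) : AntitoneOn (erlangDensity k) (Ici k) := by
  refine antitoneOn_of_deriv_nonpos (convex_Ici _)
    (fun r _ => (hasDerivAt_erlangDensity k r).continuousAt.continuousWithinAt)
    (fun r _ => (hasDerivAt_erlangDensity k r).differentiableAt.differentiableWithinAt)
    fun r hr => ?_
  rw [interior_Ici] at hr
  rw [(hasDerivAt_erlangDensity _ r).deriv]
  apply mul_nonpos_of_nonpos_of_nonneg (div_nonpos_of_nonpos_of_nonneg ?_ (by positivity))
    (exp_pos _).le
  have hr0 : 0 < r := lt_of_le_of_lt k.cast_nonneg hr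
  cases k with
  | zero => simp
  | succ k =>
    rw [add_tsub_cancel_right, pow_succ]
    have : (0 : ℝ) ≤ r ^ k := pow_nonneg hr0.le k
    have : ((k + 1 : ℕ) : ℝ) < r := hr
    push_cast at this ⊢
    nlinarith

theorem erlangDensity_eq_gammaIntegrand (k : ℕ) :
    erlangDensity k = fun r => exp (-r) * r ^ ((k + 1 : ℝ) - 1) / k ! := by
  ext r
  rw [add_sub_cancel_right, rpow_natCast, erlangDensity]
  ring

theorem integrableOn_erlangDensity (k : ℕ) : IntegrableOn (erlangDensity k) (Ioi 0) := by
  rw [erlangDensity_eq_gammaIntegrand]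
  exact (GammaIntegral_convergent (by positivity)).div_const _

theorem integral_erlangDensity (k : ℕ) : ∫ r in Ioi 0, erlangDensity k r = 1 := by
  rw [erlangDensity_eq_gammaIntegrand, integral_div, ← Gamma_eq_integral (by positivity),
    Gamma_nat_eq_factorial, div_self (by positivity)]

theorem setIntegral_erlangDensity_cantorIterate_le (n k j : ℕ) {L : ℝ} (hL : 0 ≤ L)
    (hj : (3 : ℝ) ^ j ≤ max 1 L) :
    ∫ r in cantorIterate n L, erlangDensity k r ≤ 3 * (2 ^ n * (L / 3 ^ n) / 2 ^ j) := by
  have hCN : cantorIterate n L ⊆ Ico 0 (⌊L⌋₊ + 1 : ℕ) :=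
    (cantorIterate_subset_Icc n L).trans
      fun r hr => ⟨hr.1, by push_cast; linarith [hr.2, Nat.lt_floor_add_one L]⟩
  have h := setIntegral_le_of_unimodal (integrableOn_erlangDensity k)
    (fun r hr => erlangDensity_nonneg k hr) (monotoneOn_erlangDensity k)
    (antitoneOn_erlangDensity k) (measurableSet_cantorIterate n L) hCN (by positivity)
    fun i => volume_cantorIterate_inter_Ico_le n j hj i
  rw [integral_erlangDensity] at h
  have hscale : (2 / 3 : ℝ) ^ n * L = 2 ^ n * (L / 3 ^ n) := by rw [div_pow]; field_simp
  refine hscale ▸ h.trans (mul_le_mul_of_nonneg_right ?_ (by positivity))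
  linarith [erlangDensity_le_one k k.cast_nonneg]

theorem exp_neg_one_mul_le_setIntegral_cantorIterate {n j : ℕ} {L : ℝ} (hL : 0 ≤ L)
    (hLn : L ≤ 3 ^ n) (hLj : L ≤ 3 ^ j) :
    exp (-1) * (2 ^ n * (L / 3 ^ n) / 2 ^ j) ≤ ∫ r in cantorIterate n L, exp (-r) := by
  obtain ⟨m, p, rfl, hpj, hLp⟩ : ∃ m p, n = m + p ∧ p ≤ j ∧ L ≤ 3 ^ p := by
    rcases le_total j n with h | h
    · exact ⟨n - j, j, by omega, le_rfl, hLj⟩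
    · exact ⟨0, n, by omega, h, hLn⟩
  set S := cantorIterate m (L / 3 ^ p)
  have hSC : S ⊆ cantorIterate (m + p) L := cantorIterate_div_pow_subset m p L
  have hS1 : S ⊆ Icc 0 1 := (cantorIterate_subset_Icc _ _).trans
    (Icc_subset_Icc_right (div_le_one_of_le₀ hLp (by positivity)))
  have hint : IntegrableOn (fun r => exp (-r)) (cantorIterate (m + p) L) :=
    ContinuousOn.integrableOn_compact (isCompact_cantorIterate _ L) (by fun_prop)
  calc exp (-1) * (2 ^ (m + p) * (L / 3 ^ (m + p)) / 2 ^ j)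
      ≤ exp (-1) * (2 ^ (m + p) * (L / 3 ^ (m + p)) / 2 ^ p) := by
        gcongr; norm_num
    _ = exp (-1) * volume.real S := by
        rw [measureReal_def, volume_cantorIterate, ENNReal.toReal_ofReal (by positivity),
          pow_add, pow_add, div_pow]
        field_simp
    _ ≤ ∫ r in S, exp (-r) :=
        setIntegral_ge_of_const_le_real (measurableSet_cantorIterate _ _)
          (by rw [volume_cantorIterate]; exact ENNReal.ofReal_ne_top)
          (fun r hr => exp_le_exp.2 (by linarith [(hS1 hr).2])) (hint.mono_set hSC)
    _ ≤ ∫ r in cantorIterate (m + p) L, exp (-r) :=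
        setIntegral_mono_set hint (Filter.Eventually.of_forall fun r => (exp_pos _).le)
          hSC.eventuallyLE

theorem three_pow_rpow_log_div_log (m : ℕ) : ((3 : ℝ) ^ m) ^ (log 2 / log 3) = 2 ^ m := by
  rw [← rpow_pow_comm (by norm_num), ← logb,
    rpow_logb (by norm_num) (by norm_num) (by norm_num)]

theorem two_pow_le_rpow_log_div_log {x : ℝ} {j : ℕ} (hj : (3 : ℝ) ^ j ≤ x) :
    (2 : ℝ) ^ j ≤ x ^ (log 2 / log 3) := by
  rw [← three_pow_rpow_log_div_log]
  exact rpow_le_rpow (by positivity) hj (by positivity)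

theorem rpow_log_div_log_le_two_pow {x : ℝ} {j : ℕ} (hx : 0 ≤ x) (hj : x ≤ 3 ^ j) :
    x ^ (log 2 / log 3) ≤ 2 ^ j := by
  rw [← three_pow_rpow_log_div_log]
  exact rpow_le_rpow hx hj (by positivity)

theorem two_thirds_mul_le_one_sub_exp_neg {x : ℝ} (hx0 : 0 ≤ x) (hx : x ≤ 1 / 2) :
    2 / 3 * x ≤ 1 - exp (-x) := by
  have h : exp (-x) * (1 + x) ≤ 1 :=
    calc exp (-x) * (1 + x) ≤ exp (-x) * exp x :=
          mul_le_mul_of_nonneg_left (by linarith [add_one_le_exp x]) (exp_pos _).le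
      _ = 1 := by rw [← exp_add, neg_add_cancel, exp_zero]
  nlinarith [mul_nonneg hx0 (by linarith : 0 ≤ 1 - 2 * x)]

/-- Two-sided asymptotic estimate for the operator norm of the Daubechies
operator on the `n`-iterate spherically symmetric Cantor set: uniformly in
`n` and `L = πR²` with `0 < L ≤ 3ⁿ/2`,
`sup_k ∫_{C_n(L)} (r^k/k!)e^{-r} dr ≍ 2ⁿ(1-e^{-L/3ⁿ})·(2L+1)^{-ln2/ln3}`. -/
theorem cantor_operator_norm_asymptotics :
    ∃ c₁ c₂ : ℝ, 0 < c₁ ∧ c₁ ≤ c₂ ∧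
      ∀ n : ℕ, ∀ L : ℝ, 0 < L → L ≤ 3 ^ n / 2 →
        c₁ ≤ (2 * L + 1) ^ (Real.log 2 / Real.log 3) /
            (2 ^ n * (1 - Real.exp (-(L / 3 ^ n)))) *
            (⨆ k : ℕ, ∫ r in cantorIterate n L,
              r ^ k / (Nat.factorial k) * Real.exp (-r)) ∧
        (2 * L + 1) ^ (Real.log 2 / Real.log 3) /
            (2 ^ n * (1 - Real.exp (-(L / 3 ^ n)))) *
            (⨆ k : ℕ, ∫ r in cantorIterate n L,
              r ^ k / (Nat.factorial k) * Real.exp (-r)) ≤ c₂ := by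
  refine ⟨exp (-1) / 2, 18, by positivity,
    by linarith [exp_le_one_iff.2 (by norm_num : (-1 : ℝ) ≤ 0)], fun n L hL hLn => ?_⟩
  simp only [← erlangDensity_def]
  obtain ⟨j, hj, hjL⟩ := exists_nat_pow_near (le_max_left 1 L) (by norm_num : (1 : ℝ) < 3)
  rw [max_lt_iff] at hjL
  set u := 2 ^ n * (L / 3 ^ n) with hu
  have hℓ : L / 3 ^ n ≤ 1 / 2 := by rw [div_le_iff₀ (by positivity)]; linarith
  have hA_low : (2 : ℝ) ^ j ≤ (2 * L + 1) ^ (log 2 / log 3) :=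
    two_pow_le_rpow_log_div_log (hj.trans (max_le (by linarith) (by linarith)))
  have hA_up : (2 * L + 1) ^ (log 2 / log 3) ≤ 2 ^ (j + 2) :=
    rpow_log_div_log_le_two_pow (by positivity) (by rw [pow_succ]; linarith)
  have hD_low : 2 / 3 * u ≤ 2 ^ n * (1 - exp (-(L / 3 ^ n))) := by
    rw [hu, mul_left_comm]
    exact mul_le_mul_of_nonneg_left (two_thirds_mul_le_one_sub_exp_neg (by positivity) hℓ)
      (by positivity)
  have hD_up : 2 ^ n * (1 - exp (-(L / 3 ^ n))) ≤ u :=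
    mul_le_mul_of_nonneg_left (by linarith [one_sub_le_exp_neg (L / 3 ^ n)]) (by positivity)
  have heig (k : ℕ) := setIntegral_erlangDensity_cantorIterate_le n k j hL.le hj
  have hS_low : exp (-1) * (u / 2 ^ (j + 1)) ≤
      ⨆ k, ∫ r in cantorIterate n L, erlangDensity k r := by
    refine le_trans ?_ (le_ciSup ⟨_, forall_mem_range.2 heig⟩ 0)
    simpa using exp_neg_one_mul_le_setIntegral_cantorIterate hL.le (by linarith) hjL.2.le
  have hu0 : 0 < u := by positivity
  constructor
  · calc exp (-1) / 2 = 2 ^ j / u * (exp (-1) * (u / 2 ^ (j + 1))) := by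
          field_simp; ring
      _ ≤ _ := mul_le_mul (div_le_div₀ (by positivity) hA_low (by linarith) hD_up) hS_low
          (by positivity) (div_nonneg (by positivity) (by linarith))
  · calc _ ≤ 2 ^ (j + 2) / (2 / 3 * u) * (3 * (u / 2 ^ j)) :=
          mul_le_mul (div_le_div₀ (by positivity) hA_up (by positivity) hD_low) (ciSup_le heig)
            (hS_low.trans' (by positivity)) (by positivity)
      _ = 18 := by field_simp; ring
end

section
/- For every L > 0 and every n ∈ ℕ, ∫_{C_n(L)} e^{-r} dr = (1 − e^{-L/3^n})·∏_{j=1}^{n} (1 + e^{-2L/3^j}). -/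
open Real MeasureTheory

theorem Finset.prod_Icc_one_succ' {M : Type*} [CommMonoid M] (f : ℕ → M) (n : ℕ) :
    ∏ j ∈ Finset.Icc 1 (n + 1), f j = f 1 * ∏ j ∈ Finset.Icc 1 n, f (j + 1) := by
  rw [← Finset.insert_Icc_add_one_left_eq_Icc (by omega), Finset.prod_insert (by simp),
    ← Finset.map_add_right_Icc, Finset.prod_map]
  rfl

theorem setIntegral_exp_neg_Icc {L : ℝ} (hL : 0 ≤ L) :
    ∫ r in Set.Icc 0 L, exp (-r) = 1 - exp (-L) := by
  rw [integral_Icc_eq_integral_Ioc, ← intervalIntegral.integral_of_le hL,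
    intervalIntegral.integral_comp_neg (fun x => exp x), integral_exp]
  simp

theorem setIntegral_exp_neg_image_add (a : ℝ) (s : Set ℝ) :
    ∫ r in (a + ·) '' s, exp (-r) = exp (-a) * ∫ r in s, exp (-r) := by
  rw [(measurePreserving_add_left volume a).setIntegral_image_emb (measurableEmbedding_addLeft a),
    ← integral_const_mul]
  simp only [neg_add, exp_add]

namespace cantorIterate

theorem subset_Icc (n : ℕ) {L : ℝ} (hL : 0 ≤ L) : cantorIterate n L ⊆ Set.Icc 0 L := by
  induction n with
  | zero => exact subset_rfl
  | succ n ih =>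
    rintro _ (⟨x, hx, rfl⟩ | ⟨x, hx, rfl⟩) <;>
    · obtain ⟨h0, hxL⟩ := ih hx
      constructor <;> linarith

theorem isCompact (n : ℕ) (L : ℝ) : IsCompact (cantorIterate n L) := by
  induction n with
  | zero => exact isCompact_Icc
  | succ n ih => exact (ih.image (by fun_prop)).union (ih.image (by fun_prop))

theorem image_div_three (n : ℕ) (L : ℝ) :
    (· / 3) '' cantorIterate n L = cantorIterate n (L / 3) := by
  induction n with
  | zero =>
    ext x
    simp only [cantorIterate, Set.mem_image, Set.mem_Icc]
    constructor
    · rintro ⟨y, ⟨h0, hL⟩, rfl⟩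
      constructor <;> linarith
    · rintro ⟨h0, hL⟩
      exact ⟨3 * x, ⟨by linarith, by linarith⟩, by ring⟩
  | succ n ih =>
    simp only [cantorIterate, Set.image_union, Set.image_image, ← ih]
    congr 2
    funext x
    ring

theorem succ_eq (n : ℕ) (L : ℝ) :
    cantorIterate (n + 1) L =
      cantorIterate n (L / 3) ∪ (2 * L / 3 + ·) '' cantorIterate n (L / 3) := by
  rw [← image_div_three, Set.image_image]
  rfl

end cantorIterate

theorem setIntegral_exp_neg_cantorIterate_succ (n : ℕ) {L : ℝ} (hL : 0 < L) :
    ∫ r in cantorIterate (n + 1) L, exp (-r) =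
      (1 + exp (-(2 * L / 3))) * ∫ r in cantorIterate n (L / 3), exp (-r) := by
  rw [cantorIterate.succ_eq]
  set C := cantorIterate n (L / 3)
  have hC : C ⊆ Set.Icc 0 (L / 3) := cantorIterate.subset_Icc n (by positivity)
  have hcompact : IsCompact C := cantorIterate.isCompact n _
  have hcompact' : IsCompact ((2 * L / 3 + ·) '' C) := hcompact.image (by fun_prop)
  have hint {K : Set ℝ} (hK : IsCompact K) : IntegrableOn (fun r => exp (-r)) K :=
    (continuous_exp.comp continuous_neg).continuousOn.integrableOn_compact hK
  have hdisj : Disjoint C ((2 * L / 3 + ·) '' C) := by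
    rw [Set.disjoint_left]
    rintro _ hx ⟨y, hy, rfl⟩
    linarith [(hC hx).2, (hC hy).1]
  rw [setIntegral_union hdisj hcompact'.measurableSet (hint hcompact) (hint hcompact'),
    setIntegral_exp_neg_image_add]
  ring

/-- Product formula for the first eigenvalue:
`∫_{C_n(L)} e^{-r} dr = (1 - e^{-L/3ⁿ})·∏_{j=1}^{n} (1 + e^{-2L/3ʲ})`. -/
theorem cantor_first_eigenvalue_product (L : ℝ) (hL : 0 < L) (n : ℕ) :
    ∫ r in cantorIterate n L, Real.exp (-r) =
      (1 - Real.exp (-(L / 3 ^ n))) *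
        ∏ j ∈ Finset.Icc 1 n, (1 + Real.exp (-(2 * L / 3 ^ j))) := by
  induction n generalizing L with
  | zero => simp [cantorIterate, setIntegral_exp_neg_Icc hL.le]
  | succ n ih =>
    rw [setIntegral_exp_neg_cantorIterate_succ n hL, ih (L / 3) (by positivity),
      Finset.prod_Icc_one_succ']
    have hscale (a : ℝ) (j : ℕ) : a / 3 / 3 ^ j = a / 3 ^ (j + 1) := by ring
    simp only [mul_div_assoc', hscale, pow_one]
    ring
end

section
/- The supremum over y ∈ [0,1] of the series Σ_{j=1}^∞ [ ln(1 + y^{1/3^j}) − y^{1/3^j}·ln 2 ] is finite; in particular the series converges for every y ∈ [0,1] and is bounded uniformly in y. -/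
open Real

private lemma geom_tail_aux : ∀ n : ℕ, ∑ i ∈ Finset.range n, (1/2:ℝ)^(n-i) ≤ 1 := by
  intro n
  induction n with
  | zero => simp
  | succ n ih =>
    rw [Finset.sum_range_succ]
    have h1 : ∑ i ∈ Finset.range n, (1/2:ℝ)^(n+1-i)
        = (1/2) * ∑ i ∈ Finset.range n, (1/2:ℝ)^(n-i) := by
      rw [Finset.mul_sum]
      refine Finset.sum_congr rfl fun i hi => ?_
      have hi' : i < n := Finset.mem_range.mp hi
      rw [show n + 1 - i = (n - i) + 1 from by omega, pow_succ]
      ring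
    rw [h1, show n + 1 - n = 1 from by omega]
    nlinarith

private lemma key_lemma (t f : ℕ → ℝ) (h0 : ∀ j, 0 ≤ t j) (h1 : ∀ j, t j ≤ 1)
    (hc : ∀ j, t j = (t (j+1))^3)
    (hf0 : ∀ j, 0 ≤ f j) (hft : ∀ j, f j ≤ t j) (hf1 : ∀ j, f j ≤ 1 - t j)
    (j₀ : ℕ) (hj₀ : 1/2 ≤ t j₀) (hmin : ∀ j, j < j₀ → t j < 1/2) :
    Summable f ∧ (∑' j, f j) ≤ 3 := by
  -- decay below j₀
  have A : ∀ d j, j + (d+1) = j₀ → t j ≤ (1/2:ℝ)^(d+1) := by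
    intro d
    induction d with
    | zero =>
      intro j hj
      simpa using (hmin j (by omega)).le
    | succ d ih =>
      intro j hj
      have h2 : t (j+1) ≤ (1/2:ℝ)^(d+1) := ih (j+1) (by omega)
      rw [hc j]
      calc (t (j+1))^3 ≤ ((1/2:ℝ)^(d+1))^3 := pow_le_pow_left₀ (h0 _) h2 3
        _ = (1/2:ℝ)^(3*(d+1)) := by rw [← pow_mul, mul_comm]
        _ ≤ (1/2:ℝ)^(d+1+1) := pow_le_pow_of_le_one (by norm_num) (by norm_num) (by omega)
  have mono : ∀ j, t j ≤ t (j+1) := by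
    intro j
    rw [hc j]
    calc (t (j+1))^3 ≤ (t (j+1))^1 :=
          pow_le_pow_of_le_one (h0 _) (h1 _) (by omega)
      _ = t (j+1) := pow_one _
  have B0 : ∀ k, 1/2 ≤ t (j₀ + k) := by
    intro k
    induction k with
    | zero => simpa using hj₀
    | succ k ih => exact ih.trans (mono (j₀ + k))
  -- decay above j₀
  have B : ∀ k, 1 - t (j₀ + k) ≤ (1/2:ℝ) * (4/7:ℝ)^k := by
    intro k
    induction k with
    | zero => simp; linarith [hj₀]
    | succ k ih =>
      have hs : 1/2 ≤ t (j₀ + k + 1) := by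
        have := B0 (k+1); rwa [← Nat.add_assoc] at this
      have hs1 : t (j₀ + k + 1) ≤ 1 := h1 _
      have hcube : t (j₀ + k) = (t (j₀ + k + 1))^3 := hc _
      have hstep : 1 - t (j₀ + k + 1) ≤ (4/7) * (1 - t (j₀ + k)) := by
        rw [hcube]
        set s := t (j₀ + k + 1)
        nlinarith [mul_nonneg (mul_nonneg (by linarith : (0:ℝ) ≤ 1 - s)
          (by linarith : (0:ℝ) ≤ 2*s - 1)) (by linarith : (0:ℝ) ≤ 2*s + 3)]
      have : 1 - t (j₀ + (k+1)) ≤ (4/7) * (1 - t (j₀ + k)) := by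
        rwa [← Nat.add_assoc]
      calc 1 - t (j₀ + (k+1)) ≤ (4/7) * (1 - t (j₀ + k)) := this
        _ ≤ (4/7) * ((1/2) * (4/7:ℝ)^k) := by nlinarith
        _ = (1/2) * (4/7:ℝ)^(k+1) := by ring
  set u : ℕ → ℝ := fun j => if j < j₀ then (1/2:ℝ)^(j₀ - j) else (1/2)*(4/7:ℝ)^(j - j₀) with hu
  have hfu : ∀ j, f j ≤ u j := by
    intro j
    by_cases h : j < j₀
    · simp only [hu, if_pos h]
      have hA := A (j₀ - j - 1) j (by omega)
      rw [show j₀ - j - 1 + 1 = j₀ - j from by omega] at hA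
      exact (hft j).trans hA
    · simp only [hu, if_neg h]
      have hB := B (j - j₀)
      rw [show j₀ + (j - j₀) = j from by omega] at hB
      exact (hf1 j).trans hB
  have hu_sum : Summable u := by
    rw [← summable_nat_add_iff j₀]
    have : (fun n => u (n + j₀)) = fun n => (1/2)*(4/7:ℝ)^n := by
      funext n
      simp only [hu, if_neg (by omega : ¬ n + j₀ < j₀), Nat.add_sub_cancel]
    rw [this]
    exact (summable_geometric_of_lt_one (by norm_num) (by norm_num)).mul_left _
  have hsf : Summable f := Summable.of_nonneg_of_le hf0 hfu hu_sum
  refine ⟨hsf, ?_⟩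
  have h2 : (∑' j, f j) ≤ ∑' j, u j := Summable.tsum_le_tsum hfu hsf hu_sum
  have h3 : (∑' j, u j) = (∑ i ∈ Finset.range j₀, u i) + ∑' n, u (n + j₀) :=
    (Summable.sum_add_tsum_nat_add j₀ hu_sum).symm
  have h4 : (∑ i ∈ Finset.range j₀, u i) ≤ 1 := by
    have : (∑ i ∈ Finset.range j₀, u i) = ∑ i ∈ Finset.range j₀, (1/2:ℝ)^(j₀ - i) := by
      refine Finset.sum_congr rfl fun i hi => ?_
      simp only [hu, if_pos (Finset.mem_range.mp hi)]
    rw [this]; exact geom_tail_aux j₀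
  have h5 : (∑' n, u (n + j₀)) = 7/6 := by
    have : (fun n => u (n + j₀)) = fun n => (1/2)*(4/7:ℝ)^n := by
      funext n
      simp only [hu, if_neg (by omega : ¬ n + j₀ < j₀), Nat.add_sub_cancel]
    rw [this, tsum_mul_left, tsum_geometric_of_lt_one (by norm_num) (by norm_num)]
    norm_num
  linarith

/-- The series `Σ_{j=1}^∞ [ln(1 + y^{1/3ʲ}) − y^{1/3ʲ}·ln 2]` converges for every
`y ∈ [0,1]` and its sum is bounded above uniformly in `y`; in particular the
supremum over `y ∈ [0,1]` is finite. -/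
theorem cantor_log_series_uniformly_bounded :
    ∃ M : ℝ, ∀ y ∈ Set.Icc (0 : ℝ) 1,
      Summable (fun j : ℕ =>
        Real.log (1 + y ^ ((1 : ℝ) / 3 ^ (j + 1))) -
          y ^ ((1 : ℝ) / 3 ^ (j + 1)) * Real.log 2) ∧
      (∑' j : ℕ,
        (Real.log (1 + y ^ ((1 : ℝ) / 3 ^ (j + 1))) -
          y ^ ((1 : ℝ) / 3 ^ (j + 1)) * Real.log 2)) ≤ M := by
  use 3
  rintro y ⟨hy0, hy1⟩
  by_cases hy : y = 0
  · subst hy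
    have hz : ∀ j : ℕ, (0:ℝ) ^ ((1:ℝ)/3^(j+1)) = 0 := fun j =>
      Real.zero_rpow (by positivity)
    simp only [hz, add_zero, Real.log_one, zero_mul, sub_zero]
    exact ⟨summable_zero, by rw [tsum_zero]; norm_num⟩
  · have hypos : 0 < y := lt_of_le_of_ne hy0 (Ne.symm hy)
    set t : ℕ → ℝ := fun j => y ^ ((1:ℝ)/3^(j+1)) with ht
    have h0 : ∀ j, 0 ≤ t j := fun j => Real.rpow_nonneg hy0 _
    have h1 : ∀ j, t j ≤ 1 := fun j => Real.rpow_le_one hy0 hy1 (by positivity)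
    have hc : ∀ j, t j = (t (j+1))^3 := by
      intro j
      show y ^ ((1:ℝ)/3^(j+1)) = (y ^ ((1:ℝ)/3^(j+1+1)))^3
      rw [← Real.rpow_natCast (y ^ ((1:ℝ)/3^(j+1+1))) 3, ← Real.rpow_mul hy0]
      congr 1
      push_cast
      rw [show ((3:ℝ)^(j+1+1)) = 3^(j+1) * 3 from pow_succ 3 (j+1)]
      have : (3:ℝ)^(j+1) ≠ 0 := by positivity
      field_simp
    have hf0 : ∀ j, 0 ≤ Real.log (1 + t j) - t j * Real.log 2 := by
      intro j
      have hconv := convexOn_exp.2 (Set.mem_univ (0:ℝ)) (Set.mem_univ (Real.log 2))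
        (by linarith [h1 j] : (0:ℝ) ≤ 1 - t j) (h0 j) (by ring)
      simp only [smul_eq_mul, mul_zero, zero_add, Real.exp_zero, mul_one,
        Real.exp_log (by norm_num : (0:ℝ) < 2)] at hconv
      have hexp : Real.exp (t j * Real.log 2) ≤ 1 + t j := by linarith
      have hlog : t j * Real.log 2 ≤ Real.log (1 + t j) :=
        (Real.le_log_iff_exp_le (by linarith [h0 j])).mpr hexp
      linarith
    have hft : ∀ j, Real.log (1 + t j) - t j * Real.log 2 ≤ t j := by
      intro j
      have hlog : Real.log (1 + t j) ≤ t j := by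
        have := Real.log_le_sub_one_of_pos (by linarith [h0 j] : (0:ℝ) < 1 + t j)
        linarith
      have h2 : 0 ≤ t j * Real.log 2 :=
        mul_nonneg (h0 j) (Real.log_nonneg (by norm_num))
      linarith
    have hf1 : ∀ j, Real.log (1 + t j) - t j * Real.log 2 ≤ 1 - t j := by
      intro j
      have hlog : Real.log (1 + t j) ≤ Real.log 2 :=
        Real.log_le_log (by linarith [h0 j]) (by linarith [h1 j])
      have hl2 : Real.log 2 ≤ 1 := by
        have := Real.log_two_lt_d9; linarith
      have hne : 0 ≤ 1 - t j := by linarith [h1 j]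
      nlinarith [Real.log_nonneg (one_le_two)]
    have hex : ∃ n, (1:ℝ)/2 ≤ t n := by
      obtain ⟨n, hn⟩ := pow_unbounded_of_one_lt (-2 * Real.log y) (by norm_num : (1:ℝ) < 3)
      refine ⟨n, ?_⟩
      have hpow : (3:ℝ)^n ≤ 3^(n+1) :=
        pow_le_pow_right₀ (by norm_num) (by omega)
      have hlogy : Real.log y ≤ 0 := Real.log_nonpos hy0 hy1
      have hpos : (0:ℝ) < 3^(n+1) := by positivity
      have h6 : -(1/2:ℝ) ≤ Real.log y * ((1:ℝ)/3^(n+1)) := by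
        rw [mul_one_div, le_div_iff₀ hpos]
        nlinarith
      have : t n = Real.exp (Real.log y * ((1:ℝ)/3^(n+1))) := by
        simp only [ht]
        rw [Real.rpow_def_of_pos hypos]
      rw [this]
      have := Real.add_one_le_exp (Real.log y * ((1:ℝ)/3^(n+1)))
      linarith
    have hkey := key_lemma t (fun j => Real.log (1 + t j) - t j * Real.log 2)
      h0 h1 hc hf0 hft hf1 (Nat.find hex) (Nat.find_spec hex)
      (fun j hj => lt_of_not_ge (Nat.find_min hex hj))
    exact hkey
end

section
/- There exist finite constants γ_1 ≤ γ_2 such that for every n ∈ ℕ and every x ∈ [0, 3^n]: γ_1 ≤ Σ_{j=1}^{n} e^{-x/3^j} − ( n − ln(x+1)/ln 3 ) ≤ γ_2. -/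
/-!
Fix a base `b > 1` and split the sum at an index `m ≤ n` with `b ^ m ≤ x ≤ b ^ (m + 1)`.
For `j ≤ m` the terms are small, since `x e^{-x/b^j} ≤ b^j`, so together they contribute at
most `b / (b - 1)`. For `j > m` each term equals `1` up to the error `1 - e^{-t} ≤ t = x / b^j`,
and these errors also add up to at most `b / (b - 1)`. Hence the sum is `n - m + O(1)`, while
`m = log_b (x + 1) + O(1)`; the theorem is the case `b = 3`, as `log y / log 3 = logb 3 y`.
-/

open Real Finset

section

variable {b x : ℝ}

lemma sum_pow_Ioc_zero_le (hb : 1 < b) (m : ℕ) :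
    ∑ j ∈ Ioc 0 m, b ^ j ≤ b ^ (m + 1) / (b - 1) := by
  have hsub : Ioc 0 m ⊆ range (m + 1) := fun j hj => by
    simp only [mem_Ioc, mem_range] at hj ⊢; omega
  calc ∑ j ∈ Ioc 0 m, b ^ j ≤ ∑ j ∈ range (m + 1), b ^ j :=
        sum_le_sum_of_subset_of_nonneg hsub fun j _ _ => by positivity
    _ = (b ^ (m + 1) - 1) / (b - 1) := geom_sum_eq hb.ne' _
    _ ≤ b ^ (m + 1) / (b - 1) := by gcongr; linarith

lemma sum_inv_pow_Ioc_le (hb : 1 < b) (m n : ℕ) :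
    ∑ j ∈ Ioc m n, (b ^ j)⁻¹ ≤ b / ((b - 1) * b ^ (m + 1)) := by
  have hb0 : 0 < b := by linarith
  have h := geom_sum_Ico_le_of_lt_one (m := m + 1) (n := n + 1) (inv_nonneg.2 hb0.le)
    (inv_lt_one_of_one_lt₀ hb)
  rw [Ico_add_one_add_one_eq_Ioc] at h
  simp only [← inv_pow]
  refine h.trans_eq ?_
  have : b - 1 ≠ 0 := by linarith
  rw [inv_pow]
  field_simp

lemma mul_exp_neg_div_le {c : ℝ} (hc : 0 < c) (x : ℝ) : x * exp (-(x / c)) ≤ c :=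
  calc x * exp (-(x / c)) = c * (x / c * exp (-(x / c))) := by field_simp
    _ ≤ c * 1 := by
      gcongr
      exact (mul_exp_neg_le_exp_neg_one _).trans (exp_le_one_iff.2 (by norm_num))
    _ = c := mul_one c

lemma sum_exp_neg_div_pow_Ioc_zero_le (hb : 1 < b) {m : ℕ} (hm : 0 < m → b ^ m ≤ x) :
    ∑ j ∈ Ioc 0 m, exp (-(x / b ^ j)) ≤ b / (b - 1) := by
  have hb1 : 0 < b - 1 := by linarith
  rcases m.eq_zero_or_pos with rfl | hm0
  · simpa using div_nonneg (by linarith) hb1.le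
  have hx : 0 < x := (pow_pos (by linarith) m).trans_le (hm hm0)
  refine le_of_mul_le_mul_left ?_ hx
  calc x * ∑ j ∈ Ioc 0 m, exp (-(x / b ^ j)) = ∑ j ∈ Ioc 0 m, x * exp (-(x / b ^ j)) :=
        mul_sum _ _ _
    _ ≤ ∑ j ∈ Ioc 0 m, b ^ j := sum_le_sum fun j _ => mul_exp_neg_div_le (by positivity) x
    _ ≤ b ^ (m + 1) / (b - 1) := sum_pow_Ioc_zero_le hb m
    _ = b ^ m * (b / (b - 1)) := by ring
    _ ≤ x * (b / (b - 1)) := by gcongr; exact hm hm0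

lemma sum_one_sub_exp_neg_div_pow_Ioc_le (hb : 1 < b) {m : ℕ}
    (hxm : x ≤ b ^ (m + 1)) (n : ℕ) :
    ∑ j ∈ Ioc m n, (1 - exp (-(x / b ^ j))) ≤ b / (b - 1) :=
  calc ∑ j ∈ Ioc m n, (1 - exp (-(x / b ^ j))) ≤ ∑ j ∈ Ioc m n, x * (b ^ j)⁻¹ :=
        sum_le_sum fun j _ => by linarith [one_sub_le_exp_neg (x / b ^ j), div_eq_mul_inv x (b ^ j)]
    _ = x * ∑ j ∈ Ioc m n, (b ^ j)⁻¹ := (mul_sum _ _ _).symm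
    _ ≤ b ^ (m + 1) * (b / ((b - 1) * b ^ (m + 1))) :=
        mul_le_mul hxm (sum_inv_pow_Ioc_le hb m n) (sum_nonneg fun j _ => by positivity)
          (by positivity)
    _ = b / (b - 1) := by field_simp

lemma sum_exp_neg_div_pow_Ioc_le (hb : 0 ≤ b) (hx : 0 ≤ x) {m n : ℕ} (hmn : m ≤ n) :
    ∑ j ∈ Ioc m n, exp (-(x / b ^ j)) ≤ n - m :=
  calc ∑ j ∈ Ioc m n, exp (-(x / b ^ j)) ≤ ∑ j ∈ Ioc m n, (1 : ℝ) :=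
        sum_le_sum fun j _ => exp_le_one_iff.2 (neg_nonpos.2 (by positivity))
    _ = n - m := by simp [Nat.cast_sub hmn]

lemma exists_pow_le_and_le_pow_succ (hb : 1 ≤ b) {n : ℕ} (hxn : x ≤ b ^ n) :
    ∃ m ≤ n, (0 < m → b ^ m ≤ x) ∧ x ≤ b ^ (m + 1) := by
  classical
  have hn : x ≤ b ^ (n + 1) := hxn.trans (pow_le_pow_right₀ hb n.le_succ)
  have hex : ∃ m, x ≤ b ^ (m + 1) := ⟨n, hn⟩
  refine ⟨Nat.find hex, Nat.find_min' hex hn, fun hpos => ?_, Nat.find_spec hex⟩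
  have := Nat.find_min hex (Nat.sub_one_lt hpos.ne')
  rw [Nat.sub_add_cancel hpos] at this
  exact (not_le.1 this).le

lemma natCast_le_logb_of_pow_le (hb : 1 < b) {y : ℝ} {m : ℕ} (h : b ^ m ≤ y) :
    (m : ℝ) ≤ logb b y := by
  rwa [le_logb_iff_rpow_le hb ((pow_pos (by linarith) m).trans_le h), rpow_natCast]

lemma logb_add_one_le_of_le_pow (hb : 1 < b) (hx : 0 ≤ x) {k : ℕ} (h : x ≤ b ^ k) :
    logb b (x + 1) ≤ k + logb b 2 :=
  calc logb b (x + 1) ≤ logb b (2 * b ^ k) :=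
        logb_le_logb_of_le hb (by linarith) (by linarith [one_le_pow₀ (n := k) hb.le])
    _ = k + logb b 2 := by
        rw [logb_mul two_ne_zero (by positivity), logb_pow, logb_self_eq_one hb, mul_one, add_comm]

theorem sum_exp_neg_div_pow_sub_logb_bounds (hb : 1 < b) (hx : 0 ≤ x) {n : ℕ}
    (hxn : x ≤ b ^ n) :
    -(b / (b - 1)) ≤ (∑ j ∈ Icc 1 n, exp (-(x / b ^ j))) - (n - logb b (x + 1)) ∧
      (∑ j ∈ Icc 1 n, exp (-(x / b ^ j))) - (n - logb b (x + 1)) ≤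
        b / (b - 1) + 1 + logb b 2 := by
  obtain ⟨m, hmn, hlow, hup⟩ := exists_pow_le_and_le_pow_succ hb.le hxn
  have hsplit : ∑ j ∈ Icc 1 n, exp (-(x / b ^ j)) =
      ∑ j ∈ Ioc 0 m, exp (-(x / b ^ j)) + ∑ j ∈ Ioc m n, exp (-(x / b ^ j)) := by
    rw [sum_Ioc_consecutive _ m.zero_le hmn, ← Icc_add_one_left_eq_Ioc, zero_add]
  have hhead_nonneg : 0 ≤ ∑ j ∈ Ioc 0 m, exp (-(x / b ^ j)) := sum_nonneg fun j _ => (exp_pos _).le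
  have hhead := sum_exp_neg_div_pow_Ioc_zero_le hb hlow
  have htail_le := sum_exp_neg_div_pow_Ioc_le (b := b) (by linarith) hx hmn
  have htail_ge : (n - m : ℝ) - b / (b - 1) ≤ ∑ j ∈ Ioc m n, exp (-(x / b ^ j)) := by
    have := sum_one_sub_exp_neg_div_pow_Ioc_le hb hup n
    rw [sum_sub_distrib] at this
    simp only [sum_const, Nat.card_Ioc, nsmul_eq_mul, mul_one, Nat.cast_sub hmn] at this
    linarith
  have hlog_ge : (m : ℝ) ≤ logb b (x + 1) := by
    refine natCast_le_logb_of_pow_le hb ?_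
    rcases m.eq_zero_or_pos with rfl | hm
    · simpa using hx
    · linarith [hlow hm]
  have hlog_le := logb_add_one_le_of_le_pow hb hx hup
  push_cast at hlog_le
  rw [hsplit]
  constructor <;> linarith

end

/-- There exist finite constants `γ₁ ≤ γ₂` such that for every `n` and every
`x ∈ [0, 3ⁿ]`:
`γ₁ ≤ Σ_{j=1}^{n} e^{-x/3ʲ} − (n − ln(x+1)/ln 3) ≤ γ₂`. -/
theorem cantor_exponential_sum_estimate :
    ∃ γ₁ γ₂ : ℝ, γ₁ ≤ γ₂ ∧
      ∀ n : ℕ, ∀ x : ℝ, 0 ≤ x → x ≤ 3 ^ n →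
        γ₁ ≤ (∑ j ∈ Finset.Icc 1 n, Real.exp (-(x / 3 ^ j))) -
            ((n : ℝ) - Real.log (x + 1) / Real.log 3) ∧
          (∑ j ∈ Finset.Icc 1 n, Real.exp (-(x / 3 ^ j))) -
            ((n : ℝ) - Real.log (x + 1) / Real.log 3) ≤ γ₂ := by
  refine ⟨-(3 / (3 - 1)), 3 / (3 - 1) + 1 + logb 3 2, ?_, fun n x hx hxn =>
    sum_exp_neg_div_pow_sub_logb_bounds (by norm_num) hx hxn⟩
  have : 0 ≤ logb 3 2 := logb_nonneg (by norm_num) (by norm_num)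
  linarith
end
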